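/- arXiv:2308.04567 — 13 statements merged into one kernel-verified Lean document; each statement's English description precedes it below -/
import Mathlib

section
/- For every real number x and every positive integer n, the sum over k from 0 to n of (-2)^k * (n/(n+k)) * C(n+k, n-k) * (1-x)^k equals T_n(x), the n-th Chebyshev polynomial of the first kind evaluated at x. -/
open Finset

noncomputable def d (n k : ℕ) : ℝ :=
  (-2 : ℝ) ^ k * (((n + 1 + k).choose (2 * k) : ℝ) + ((n + k).choose (2 * k) : ℝ)) / 2

lemma nat_rec_key (m k : ℕ) :
    Nat.choose (m + 3) (2 * k + 2) + Nat.choose (m + 2) (2 * k + 2)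
      + Nat.choose (m + 1) (2 * k + 2) + Nat.choose m (2 * k + 2)
    = 2 * Nat.choose (m + 2) (2 * k + 2) + 2 * Nat.choose (m + 1) (2 * k + 2)
      + Nat.choose (m + 1) (2 * k) + Nat.choose m (2 * k) := by
  have h1 : (m + 3).choose (2 * k + 2)
      = (m + 2).choose (2 * k + 1) + (m + 2).choose (2 * k + 2) :=
    Nat.choose_succ_succ (m + 2) (2 * k + 1)
  have h5 : (m + 2).choose (2 * k + 1)
      = (m + 1).choose (2 * k) + (m + 1).choose (2 * k + 1) :=
    Nat.choose_succ_succ (m + 1) (2 * k)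
  have h3 : (m + 1).choose (2 * k + 1)
      = m.choose (2 * k) + m.choose (2 * k + 1) :=
    Nat.choose_succ_succ m (2 * k)
  have h4 : (m + 1).choose (2 * k + 2)
      = m.choose (2 * k + 1) + m.choose (2 * k + 2) :=
    Nat.choose_succ_succ m (2 * k + 1)
  omega

lemma d_rec (n k : ℕ) :
    d (n + 2) (k + 1) - 2 * d (n + 1) (k + 1) + d n (k + 1) = -2 * d (n + 1) k := by
  have hr : ((n + k + 4).choose (2 * k + 2) : ℝ) + ((n + k + 3).choose (2 * k + 2) : ℝ)
        + ((n + k + 2).choose (2 * k + 2) : ℝ) + ((n + k + 1).choose (2 * k + 2) : ℝ)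
      = 2 * ((n + k + 3).choose (2 * k + 2) : ℝ) + 2 * ((n + k + 2).choose (2 * k + 2) : ℝ)
        + ((n + k + 2).choose (2 * k) : ℝ) + ((n + k + 1).choose (2 * k) : ℝ) := by
    exact_mod_cast congrArg (Nat.cast : ℕ → ℝ) (nat_rec_key (n + k + 1) k)
  simp only [d]
  rw [show n + 2 + 1 + (k + 1) = n + k + 4 by ring,
      show n + 2 + (k + 1) = n + k + 3 by ring,
      show n + 1 + (k + 1) = n + k + 2 by ring,
      show n + (k + 1) = n + k + 1 by ring,
      show n + 2 + k = n + k + 2 by ring,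
      show n + 1 + k = n + k + 1 by ring,
      show 2 * (k + 1) = 2 * k + 2 by ring]
  linear_combination (-(-2 : ℝ) ^ k) * hr

lemma d_zero_of_big (n k : ℕ) (h : n + 2 ≤ k) : d n k = 0 := by
  rw [d, Nat.choose_eq_zero_of_lt (by omega), Nat.choose_eq_zero_of_lt (by omega)]
  simp

noncomputable def S (y : ℝ) (n : ℕ) : ℝ := ∑ k ∈ range (n + 2), d n k * y ^ k

lemma S_rec (y : ℝ) (n : ℕ) : S y (n + 2) = 2 * (1 - y) * S y (n + 1) - S y n := by
  have hS1 : S y (n + 1) = ∑ k ∈ range (n + 4), d (n + 1) k * y ^ k := by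
    rw [S, Finset.sum_range_succ (n := n + 3), d_zero_of_big (n + 1) (n + 3) (by omega)]
    simp
  have hS0 : S y n = ∑ k ∈ range (n + 4), d n k * y ^ k := by
    rw [S, Finset.sum_range_succ (n := n + 3), d_zero_of_big n (n + 3) (by omega),
        Finset.sum_range_succ (n := n + 2), d_zero_of_big n (n + 2) (by omega)]
    simp
  have hS2 : S y (n + 2) = ∑ k ∈ range (n + 4), d (n + 2) k * y ^ k := rfl
  have chain : ∑ k ∈ range (n + 4), (d (n + 2) k - 2 * d (n + 1) k + d n k) * y ^ k
      = -2 * y * ∑ k ∈ range (n + 4), d (n + 1) k * y ^ k := by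
    rw [Finset.sum_range_succ']
    have h0 : (d (n + 2) 0 - 2 * d (n + 1) 0 + d n 0) * y ^ 0 = 0 := by
      simp [d]; norm_num
    rw [h0, add_zero]
    rw [Finset.sum_range_succ (f := fun k => d (n + 1) k * y ^ k),
        d_zero_of_big (n + 1) (n + 3) (by omega)]
    simp only [zero_mul, add_zero]
    rw [Finset.mul_sum]
    refine Finset.sum_congr rfl fun k _ => ?_
    rw [d_rec]
    ring
  have expand : ∑ k ∈ range (n + 4), (d (n + 2) k - 2 * d (n + 1) k + d n k) * y ^ k
      = (∑ k ∈ range (n + 4), d (n + 2) k * y ^ k)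
        - 2 * (∑ k ∈ range (n + 4), d (n + 1) k * y ^ k)
        + (∑ k ∈ range (n + 4), d n k * y ^ k) := by
    rw [Finset.mul_sum, ← Finset.sum_sub_distrib, ← Finset.sum_add_distrib]
    refine Finset.sum_congr rfl fun k _ => ?_
    ring
  rw [hS0, hS1, hS2]
  linear_combination (expand.symm.trans chain)


lemma nat_key (n k : ℕ) (hk : k ≤ n + 1) :
    2 * (n + 1) * Nat.choose (n + 1 + k) (2 * k) =
      (n + 1 + k) * (Nat.choose (n + 1 + k) (2 * k) + Nat.choose (n + k) (2 * k)) := by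
  have hA := Nat.choose_succ_right_eq (n + 1 + k) (2 * k)
  have hB := Nat.add_one_mul_choose_eq (n + k) (2 * k)
  have h1 : n + 1 + k - 2 * k = n + 1 - k := by omega
  rw [h1] at hA
  have h3 : n + k + 1 = n + 1 + k := by omega
  rw [h3] at hB
  have h2 : 2 * (n + 1) = (n + 1 + k) + (n + 1 - k) := by omega
  have h4 : Nat.choose (n + 1 + k) (2 * k) * (n + 1 - k)
      = (n + 1 + k) * Nat.choose (n + k) (2 * k) := by
    rw [← hA]; exact hB.symm
  rw [h2, add_mul, mul_add]
  rw [mul_comm (n + 1 - k) _, h4]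

lemma coeff_eq (n k : ℕ) (hk : k ≤ n + 1) (y : ℝ) :
    (-2 : ℝ) ^ k * (((n : ℝ) + 1) / ((n + 1 : ℝ) + k)) *
      (Nat.choose (n + 1 + k) (n + 1 - k)) * y ^ k = d n k * y ^ k := by
  have hsymm : (n + 1 + k).choose (n + 1 - k) = (n + 1 + k).choose (2 * k) := by
    have h2k : 2 * k ≤ n + 1 + k := by omega
    have := Nat.choose_symm h2k
    rwa [show n + 1 + k - 2 * k = n + 1 - k by omega] at this
  rw [hsymm, d]
  have hne : ((n : ℝ) + 1) + k ≠ 0 := by positivity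
  have hcast : 2 * ((n : ℝ) + 1) * ((n + 1 + k).choose (2 * k) : ℝ) =
      (((n : ℝ) + 1) + k) * (((n + 1 + k).choose (2 * k) : ℝ) + ((n + k).choose (2 * k) : ℝ)) := by
    exact_mod_cast congrArg (Nat.cast : ℕ → ℝ) (nat_key n k hk)
  have hs : ((n : ℝ) + 1) / (((n : ℝ) + 1) + k) * ((n + 1 + k).choose (2 * k) : ℝ)
      = (((n + 1 + k).choose (2 * k) : ℝ) + ((n + k).choose (2 * k) : ℝ)) / 2 := by
    rw [div_mul_eq_mul_div, div_eq_div_iff hne two_ne_zero]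
    linear_combination hcast
  have hgoal : ((n : ℝ) + 1) / ((n + 1 : ℝ) + k) = ((n : ℝ) + 1) / (((n : ℝ) + 1) + k) := by
    norm_cast
  rw [hgoal]
  linear_combination ((-2 : ℝ) ^ k * y ^ k) * hs

lemma S_zero (y : ℝ) : S y 0 = 1 - y := by
  rw [S]
  simp [Finset.sum_range_succ, d]
  norm_num
  ring

lemma S_one (y : ℝ) : S y 1 = 2 * (1 - y) ^ 2 - 1 := by
  rw [S]
  simp [Finset.sum_range_succ, d]
  norm_num [Nat.choose]
  ring

lemma S_eq (y : ℝ) : ∀ n : ℕ,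
    S y n = (Polynomial.Chebyshev.T ℝ ((n : ℤ) + 1)).eval (1 - y) ∧
    S y (n + 1) = (Polynomial.Chebyshev.T ℝ ((n : ℤ) + 2)).eval (1 - y) := by
  intro n
  induction n with
  | zero =>
    constructor
    · rw [S_zero]
      norm_num [Polynomial.Chebyshev.T_one]
    · rw [S_one]
      norm_num [Polynomial.Chebyshev.T_two]
  | succ m ih =>
    have c1 : ((m + 1 : ℕ) : ℤ) + 1 = (m : ℤ) + 2 := by push_cast; ring
    have c2 : ((m + 1 : ℕ) : ℤ) + 2 = (m : ℤ) + 3 := by push_cast; ring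
    constructor
    · rw [c1]; exact ih.2
    · rw [c2, show m + 1 + 1 = m + 2 from rfl, S_rec]
      have hT := Polynomial.Chebyshev.T_add_two ℝ ((m : ℤ) + 1)
      have hT' := congrArg (Polynomial.eval (1 - y)) hT
      simp only [Polynomial.eval_sub, Polynomial.eval_mul, Polynomial.eval_ofNat,
        Polynomial.eval_X] at hT'
      rw [ih.1, ih.2]
      rw [show (m : ℤ) + 3 = (m : ℤ) + 1 + 2 by ring,
          show (m : ℤ) + 2 = (m : ℤ) + 1 + 1 by ring]
      rw [hT']

theorem stmt_0 (x : ℝ) (n : ℕ) (hn : 0 < n) :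
    ∑ k ∈ range (n + 1), (-2 : ℝ) ^ k * ((n : ℝ) / (n + k)) *
      (Nat.choose (n + k) (n - k)) * (1 - x) ^ k =
    (Polynomial.Chebyshev.T ℝ n).eval x := by
  obtain ⟨m, rfl⟩ : ∃ m, n = m + 1 := ⟨n - 1, by omega⟩
  have step : ∑ k ∈ range (m + 1 + 1), (-2 : ℝ) ^ k * (((m + 1 : ℕ) : ℝ) / (((m + 1 : ℕ) : ℝ) + k)) *
      (Nat.choose (m + 1 + k) (m + 1 - k)) * (1 - x) ^ k = S (1 - x) m := by
    rw [S]
    refine Finset.sum_congr rfl fun k hk => ?_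
    have hk' : k ≤ m + 1 := by
      have := Finset.mem_range.mp hk; omega
    have := coeff_eq m k hk' (1 - x)
    rw [← this]
    push_cast
    ring
  rw [step]
  have := (S_eq (1 - x) m).1
  rw [show (1 : ℝ) - (1 - x) = x by ring] at this
  rw [this]
  norm_num
end

section
/- For every real number x and every positive integer n, the sum over k from 0 to n of 4^k * (n/(n+k)) * C(n+k, n-k) * (x^2-1)^k equals T_{2n}(x). -/
/-!
Since `T (2n) = T n ∘ T 2` and `T 2 x = 1 + 2 (x² - 1)`, the sum is the Taylor expansion of `T n`
at `1`, evaluated at `2 (x² - 1)`. Its Taylor coefficients `h k = (T n)^(k)(1) / k!` satisfy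
`(2k + 1)(k + 1) h (k + 1) = (n² - k²) h k` and `h 0 = 1`, which determines
`h k = 2^k n / (n + k) C(n + k, 2k)`.
-/

open Finset Polynomial Polynomial.Chebyshev

namespace Polynomial

theorem eval_add_eq_sum_hasseDeriv {R : Type*} [CommSemiring R] (f : R[X]) (r s : R) :
    f.eval (s + r) = ∑ k ∈ range (f.natDegree + 1), (hasseDeriv k f).eval r * s ^ k := by
  rw [← taylor_eval, eval_eq_sum_range, natDegree_taylor]
  simp only [taylor_coeff]

theorem factorial_mul_hasseDeriv_eval {R : Type*} [CommSemiring R] (f : R[X]) (k : ℕ) (r : R) :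
    (k.factorial : R) * (hasseDeriv k f).eval r = (derivative^[k] f).eval r := by
  rw [← factorial_smul_hasseDeriv, LinearMap.smul_apply, eval_smul, nsmul_eq_mul]

end Polynomial

theorem Nat.cast_choose_add_one_two_mul_add_two {R : Type*} [CommRing R] (n k : ℕ) :
    ((2 * k + 2) * (2 * k + 1) : R) * (n + k + 1).choose (2 * k + 2) =
      (n + k + 1) * (n - k) * (n + k).choose (2 * k) := by
  rcases lt_or_ge k n with hk | hk
  · have h₁ := congrArg (Nat.cast : ℕ → R) (Nat.add_one_mul_choose_eq (n + k) (2 * k + 1))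
    have h₂ := congrArg (Nat.cast : ℕ → R) (Nat.choose_succ_right_eq (n + k) (2 * k))
    rw [show n + k - 2 * k = n - k by omega] at h₂
    push_cast [hk.le] at h₁ h₂
    linear_combination (2 * (k : R) + 1) * h₁.symm + ((n : R) + k + 1) * h₂
  · rcases hk.lt_or_eq with hk | rfl
    · rw [Nat.choose_eq_zero_of_lt (by omega), Nat.choose_eq_zero_of_lt (by omega)]
      simp
    · rw [Nat.choose_eq_zero_of_lt (by omega)]
      simp

namespace Polynomial.Chebyshev

variable {𝔽 : Type*} [Field 𝔽] [CharZero 𝔽]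

theorem hasseDeriv_T_eval_one_recurrence (n : ℤ) (k : ℕ) :
    (2 * k + 1) * (k + 1) * (hasseDeriv (k + 1) (T 𝔽 n)).eval 1 =
      (n ^ 2 - k ^ 2) * (hasseDeriv k (T 𝔽 n)).eval 1 := by
  have h := iterate_derivative_T_eval_one_recurrence (R := 𝔽) n k
  rw [← factorial_mul_hasseDeriv_eval, ← factorial_mul_hasseDeriv_eval,
    Nat.factorial_succ] at h
  have hk : (k.factorial : 𝔽) ≠ 0 := Nat.cast_ne_zero.mpr k.factorial_ne_zero
  apply mul_left_cancel₀ hk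
  push_cast at h
  linear_combination h

theorem hasseDeriv_T_eval_one {n : ℕ} (hn : 0 < n) (k : ℕ) :
    (hasseDeriv k (T 𝔽 n)).eval 1 = 2 ^ k * (n / (n + k)) * (n + k).choose (2 * k) := by
  induction k with
  | zero => simp [T_eval_one, Nat.cast_ne_zero.mpr hn.ne']
  | succ k ih =>
    have hrec := hasseDeriv_T_eval_one_recurrence (𝔽 := 𝔽) n k
    have hchoose := Nat.cast_choose_add_one_two_mul_add_two (R := 𝔽) n k
    have h2k : (2 * k + 1 : 𝔽) ≠ 0 := by exact_mod_cast (by omega : 2 * k + 1 ≠ 0)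
    have hk : (k + 1 : 𝔽) ≠ 0 := by exact_mod_cast (by omega : k + 1 ≠ 0)
    have hnk : (n + k : 𝔽) ≠ 0 := by exact_mod_cast (by omega : n + k ≠ 0)
    have hnk1 : (n + (k + 1) : 𝔽) ≠ 0 := by exact_mod_cast (by omega : n + (k + 1) ≠ 0)
    rw [ih] at hrec
    rw [show n + (k + 1) = n + k + 1 by omega, show 2 * (k + 1) = 2 * k + 2 by omega]
    push_cast at hrec ⊢
    field_simp at hrec ⊢
    apply mul_left_cancel₀ (mul_ne_zero (mul_ne_zero h2k hk) hnk)
    linear_combination ((n : 𝔽) + k + 1) * hrec - (n + k) * n * 2 ^ k * hchoose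

end Polynomial.Chebyshev

theorem stmt_1 (x : ℝ) (n : ℕ) (hn : 0 < n) :
    ∑ k ∈ range (n + 1), (4 : ℝ) ^ k * ((n : ℝ) / (n + k)) *
      (Nat.choose (n + k) (n - k)) * (x ^ 2 - 1) ^ k =
    (Polynomial.Chebyshev.T ℝ (2 * n)).eval x := by
  have hT : (T ℝ (2 * n)).eval x = (T ℝ n).eval (2 * (x ^ 2 - 1) + 1) := by
    rw [mul_comm, T_mul, eval_comp, T_two]
    simp only [eval_sub, eval_mul, eval_pow, eval_X, eval_ofNat, eval_one]
    ring_nf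
  rw [hT, eval_add_eq_sum_hasseDeriv, natDegree_T, Int.natAbs_natCast]
  refine sum_congr rfl fun k hk => ?_
  have hkn : n + k = n - k + 2 * k := by rw [mem_range] at hk; omega
  rw [hasseDeriv_T_eval_one hn, Nat.choose_symm_of_eq_add hkn,
    mul_pow, show (4 : ℝ) ^ k = 2 ^ k * 2 ^ k by rw [← mul_pow]; norm_num]
  ring
end

section
/- For every real number x and every positive integer n, the sum over k from 0 to n of (-4)^k * (n/(n+k)) * C(n+k, n-k) * x^{2k} equals (-1)^n * T_{2n}(x). -/
open Finset

section ChebAux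

open Polynomial Polynomial.Chebyshev

lemma pasc_aux (m j : ℕ) :
    (m+2).choose (j+2) + m.choose (j+2) = 2*((m+1).choose (j+2)) + m.choose j := by
  have h1 : (m+2).choose (j+2) = (m+1).choose (j+1) + (m+1).choose (j+2) :=
    Nat.choose_succ_succ _ _
  have h2 : (m+1).choose (j+1) = m.choose j + m.choose (j+1) := Nat.choose_succ_succ _ _
  have h3 : (m+1).choose (j+2) = m.choose (j+1) + m.choose (j+2) := Nat.choose_succ_succ _ _
  omega

noncomputable def Acoef (n k : ℕ) : ℝ :=
  (-4)^k * (((n+k).choose (2*k) + (n+k-1).choose (2*k) : ℕ) : ℝ) / 2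

lemma A_zero {n k : ℕ} (h : n < k) : Acoef n k = 0 := by
  have h1 : (n+k).choose (2*k) = 0 := Nat.choose_eq_zero_of_lt (by omega)
  have h2 : (n+k-1).choose (2*k) = 0 := Nat.choose_eq_zero_of_lt (by omega)
  simp [Acoef, h1, h2]

lemma A_nought (n : ℕ) : Acoef n 0 = 1 := by norm_num [Acoef]

lemma A_rec (n k : ℕ) :
    Acoef (n+2) (k+1) = 2*Acoef (n+1) (k+1) - 4*Acoef (n+1) k - Acoef n (k+1) := by
  simp only [Acoef]
  rw [show n+2+(k+1) = n+k+3 from by omega, show n+k+3-1 = n+k+2 from by omega,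
      show n+1+(k+1) = n+k+2 from by omega, show n+k+2-1 = n+k+1 from by omega,
      show n+1+k = n+k+1 from by omega, show n+k+1-1 = n+k from by omega,
      show n+(k+1) = n+k+1 from by omega,
      show 2*(k+1) = 2*k+2 from by omega]
  have h1' : ((n+k+3).choose (2*k+2) + (n+k+1).choose (2*k+2) : ℝ)
      = 2*((n+k+2).choose (2*k+2)) + (n+k+1).choose (2*k) := by
    exact_mod_cast congrArg (Nat.cast : ℕ → ℝ) (pasc_aux (n+k+1) (2*k))
  have h2' : ((n+k+2).choose (2*k+2) + (n+k).choose (2*k+2) : ℝ)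
      = 2*((n+k+1).choose (2*k+2)) + (n+k).choose (2*k) := by
    exact_mod_cast congrArg (Nat.cast : ℕ → ℝ) (pasc_aux (n+k) (2*k))
  push_cast
  linear_combination ((-4:ℝ)^(k+1)/2) * (h1' + h2')

lemma A_eq (x : ℝ) (n k : ℕ) (hn : 1 ≤ n) (hk : k ≤ n) :
    (-4 : ℝ) ^ k * ((n : ℝ) / ((n:ℝ) + (k:ℝ))) * ((n+k).choose (n-k) : ℝ) * x ^ (2*k)
      = Acoef n k * x ^ (2*k) := by
  have hsym : (n+k).choose (n-k) = (n+k).choose (2*k) := by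
    rw [show n - k = (n+k) - (2*k) from by omega, Nat.choose_symm (by omega)]
  have key : (n+k-1).choose (2*k) * (n+k) = (n+k).choose (2*k) * (n-k) := by
    have h := Nat.choose_mul_succ_eq (n+k-1) (2*k)
    rw [show n+k-1+1 = n+k from by omega] at h
    rw [h]
    congr 1
    omega
  have key' : ((n+k-1).choose (2*k) : ℝ) * ((n:ℝ)+(k:ℝ))
      = ((n+k).choose (2*k) : ℝ) * ((n:ℝ)-(k:ℝ)) := by
    have := congrArg (Nat.cast : ℕ → ℝ) key
    push_cast [hk] at this
    linarith [this]
  have hne : (n:ℝ) + (k:ℝ) ≠ 0 := by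
    have : (0:ℕ) < n + k := by omega
    exact_mod_cast (Nat.cast_pos.mpr this).ne'
  have hmain : (n : ℝ)/((n:ℝ)+(k:ℝ)) * ((n+k).choose (2*k) : ℝ)
      = (((n+k).choose (2*k) : ℝ) + ((n+k-1).choose (2*k):ℝ))/2 := by
    rw [div_mul_eq_mul_div, div_eq_div_iff hne two_ne_zero]
    linear_combination -key'
  rw [hsym]
  simp only [Acoef]
  push_cast
  linear_combination ((-4:ℝ)^k * x^(2*k)) * hmain

lemma T_eval_rec (x : ℝ) (m : ℤ) :
    (T ℝ (2*m+4)).eval x = (4*x^2-2) * (T ℝ (2*m+2)).eval x - (T ℝ (2*m)).eval x := by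
  have h : (2*m+4) = (m+2)*2 := by ring
  rw [h, T_mul, T_add_two]
  simp only [Polynomial.sub_comp, Polynomial.mul_comp, Polynomial.X_comp, Polynomial.ofNat_comp,
    ← T_mul]
  rw [show (m+1)*2 = 2*m+2 from by ring, show m*2 = 2*m from by ring, T_two]
  simp only [Polynomial.eval_sub, Polynomial.eval_mul, Polynomial.eval_ofNat, Polynomial.eval_pow,
    Polynomial.eval_X, Polynomial.eval_one, Polynomial.eval_natCast, Polynomial.eval_intCast]
  push_cast
  ring

lemma Sum_rec (x : ℝ) (m : ℕ) :
    ∑ k ∈ range (m+4), Acoef (m+3) k * x^(2*k)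
    = (2 - 4*x^2) * ∑ k ∈ range (m+4), Acoef (m+2) k * x^(2*k)
      - ∑ k ∈ range (m+4), Acoef (m+1) k * x^(2*k) := by
  have e1 : (2 - 4*x^2) * ∑ k ∈ range (m+4), Acoef (m+2) k * x^(2*k)
      = (∑ k ∈ range (m+4), 2*Acoef (m+2) k * x^(2*k))
        - ∑ k ∈ range (m+4), 4*Acoef (m+2) k * x^(2*(k+1)) := by
    rw [mul_sum, ← Finset.sum_sub_distrib]
    refine Finset.sum_congr rfl fun k _ => by ring
  rw [e1]
  rw [Finset.sum_range_succ (fun k => 4*Acoef (m+2) k * x^(2*(k+1))) (m+3)]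
  rw [A_zero (show m+2 < m+3 by omega)]
  rw [Finset.sum_range_succ' (fun k => Acoef (m+3) k * x^(2*k)) (m+3)]
  rw [Finset.sum_range_succ' (fun k => 2*Acoef (m+2) k * x^(2*k)) (m+3)]
  rw [Finset.sum_range_succ' (fun k => Acoef (m+1) k * x^(2*k)) (m+3)]
  rw [A_nought, A_nought, A_nought]
  have e2 : ∀ k ∈ range (m+3), Acoef (m+3) (k+1) * x^(2*(k+1))
      = 2*Acoef (m+2) (k+1) * x^(2*(k+1)) - 4*Acoef (m+2) k * x^(2*(k+1))
        - Acoef (m+1) (k+1) * x^(2*(k+1)) := by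
    intro k _
    rw [A_rec (m+1) k]
    ring
  rw [Finset.sum_congr rfl e2, Finset.sum_sub_distrib, Finset.sum_sub_distrib]
  ring

lemma u_step (x : ℝ) (j : ℕ) :
    (-1:ℝ)^(j+3) * (T ℝ (2*((j:ℤ)+3))).eval x
    = (2-4*x^2) * ((-1:ℝ)^(j+2) * (T ℝ (2*((j:ℤ)+2))).eval x)
      - (-1:ℝ)^(j+1) * (T ℝ (2*((j:ℤ)+1))).eval x := by
  have h := T_eval_rec x ((j:ℤ)+1)
  rw [show 2*((j:ℤ)+3) = 2*((j:ℤ)+1)+4 from by ring,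
      show 2*((j:ℤ)+2) = 2*((j:ℤ)+1)+2 from by ring, h]
  ring

lemma key_lemma (x : ℝ) : ∀ m : ℕ,
    (∑ k ∈ range (m+2), Acoef (m+1) k * x^(2*k))
      = (-1:ℝ)^(m+1) * (T ℝ (2*((m:ℤ)+1))).eval x ∧
    (∑ k ∈ range (m+3), Acoef (m+2) k * x^(2*k))
      = (-1:ℝ)^(m+2) * (T ℝ (2*((m:ℤ)+2))).eval x := by
  intro m
  induction m with
  | zero =>
    constructor
    · rw [Finset.sum_range_succ, Finset.sum_range_succ, Finset.sum_range_zero]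
      norm_num [Acoef, T_two]
      ring
    · rw [Finset.sum_range_succ, Finset.sum_range_succ, Finset.sum_range_succ,
        Finset.sum_range_zero]
      have h4 : (T ℝ 4).eval x = 8*x^4-8*x^2+1 := by
        have h : (4:ℤ) = 2*2 := by norm_num
        rw [h, T_mul, T_two]
        simp [T_two]
        ring
      norm_num [Acoef, h4]
      ring
  | succ m ih =>
    obtain ⟨ih1, ih2⟩ := ih
    constructor
    · have := ih2
      push_cast
      convert this using 3 <;> push_cast <;> ring
    · have pad2 : ∑ k ∈ range (m+4), Acoef (m+2) k * x^(2*k)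
          = ∑ k ∈ range (m+3), Acoef (m+2) k * x^(2*k) := by
        rw [Finset.sum_range_succ, A_zero (show m+2 < m+3 by omega)]
        ring
      have pad1 : ∑ k ∈ range (m+4), Acoef (m+1) k * x^(2*k)
          = ∑ k ∈ range (m+2), Acoef (m+1) k * x^(2*k) := by
        rw [Finset.sum_range_succ, A_zero (show m+1 < m+3 by omega),
          Finset.sum_range_succ, A_zero (show m+1 < m+2 by omega)]
        ring
      have hs := Sum_rec x m
      rw [pad2, pad1, ih2, ih1] at hs
      have hu := u_step x m
      have : ∑ k ∈ range (m+4), Acoef (m+3) k * x^(2*k)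
          = (-1:ℝ)^(m+3) * (T ℝ (2*((m:ℤ)+3))).eval x := by
        rw [hs, hu]
      push_cast
      convert this using 3 <;> push_cast <;> ring

end ChebAux

theorem stmt_2 (x : ℝ) (n : ℕ) (hn : 0 < n) :
    ∑ k ∈ range (n + 1), (-4 : ℝ) ^ k * ((n : ℝ) / (n + k)) *
      (Nat.choose (n + k) (n - k)) * x ^ (2 * k) =
    (-1 : ℝ) ^ n * (Polynomial.Chebyshev.T ℝ (2 * n)).eval x := by
  obtain ⟨m, rfl⟩ : ∃ m, n = m + 1 := ⟨n - 1, by omega⟩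
  have h1 : ∑ k ∈ range (m + 1 + 1), (-4 : ℝ) ^ k * (((m+1) : ℝ) / ((m+1) + k)) *
      (Nat.choose ((m+1) + k) ((m+1) - k)) * x ^ (2 * k)
      = ∑ k ∈ range (m + 2), Acoef (m+1) k * x^(2*k) := by
    refine Finset.sum_congr (by norm_num) fun k hk => ?_
    rw [mem_range] at hk
    have := A_eq x (m+1) k (by omega) (by omega)
    push_cast at this ⊢
    convert this using 2
  have h2 := (key_lemma x m).1
  rw [show (m+1+1) = m+2 from rfl] at h1 ⊢
  push_cast
  rw [h1, h2]
end

section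
/- For every positive integer n, the sum over k from 0 to n of (-2)^k * (n/(n+k)) * C(n+k, n-k) equals 0 if n is odd, and (-1)^{n/2} if n is even. -/
/-!
Let `b_n(x) = ∑ C(n+k, 2k) xᵏ` and `B_n(x) = ∑ C(n+1+k, 2k+1) xᵏ` be the Morgan–Voyce polynomials.
Since `k/(n+k) · C(n+k, 2k) = C(n+k-1, 2k-1)/2`, the sum with ratio `n/(n+k)` equals
`b_n(x) - (x/2) B_{n-1}(x)`. Pascal's rule gives `b_{n+1} = b_n + x B_n` and `B_{n+1} = B_n + b_{n+1}`,
so at `x = -2` the sum is `B_n(-2)`, and the same recurrences give `B_{n+2}(-2) = -B_n(-2)`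
with `B_0 = 1`, `B_1(-2) = 0`.
-/

open Finset

section MorganVoyce

variable {R : Type*} [CommRing R] (x : R)

def morganVoyceb (n : ℕ) : R := ∑ k ∈ range (n + 1), x ^ k * ((n + k).choose (2 * k) : R)

def morganVoyceB (n : ℕ) : R := ∑ k ∈ range (n + 1), x ^ k * ((n + 1 + k).choose (2 * k + 1) : R)

theorem morganVoyceb_eq_sum_range {n N : ℕ} (h : n < N) :
    morganVoyceb x n = ∑ k ∈ range N, x ^ k * ((n + k).choose (2 * k) : R) := by
  refine sum_subset (range_subset_range.mpr h) fun k _ hk ↦ ?_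
  rw [Nat.choose_eq_zero_of_lt (by simp at hk; omega), Nat.cast_zero, mul_zero]

theorem morganVoyceB_eq_sum_range {n N : ℕ} (h : n < N) :
    morganVoyceB x n = ∑ k ∈ range N, x ^ k * ((n + 1 + k).choose (2 * k + 1) : R) := by
  refine sum_subset (range_subset_range.mpr h) fun k _ hk ↦ ?_
  rw [Nat.choose_eq_zero_of_lt (by simp at hk; omega), Nat.cast_zero, mul_zero]

@[simp]
theorem morganVoyceb_zero : morganVoyceb x 0 = 1 := by
  simp [morganVoyceb]

@[simp]
theorem morganVoyceB_zero : morganVoyceB x 0 = 1 := by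
  simp [morganVoyceB]

theorem morganVoyceb_succ (n : ℕ) :
    morganVoyceb x (n + 1) = morganVoyceb x n + x * morganVoyceB x n := by
  have shifted : morganVoyceb x n =
      ∑ k ∈ range (n + 1), x ^ (k + 1) * ((n + k + 1).choose (2 * k + 2) : R) + 1 := by
    rw [morganVoyceb_eq_sum_range x (N := n + 1 + 1) (by omega), sum_range_succ']
    simp [add_assoc, mul_add]
  have shifted_succ : morganVoyceb x (n + 1) =
      ∑ k ∈ range (n + 1), x ^ (k + 1) * ((n + k + 2).choose (2 * k + 2) : R) + 1 := by
    rw [morganVoyceb, sum_range_succ']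
    simp [add_assoc, mul_add, add_left_comm]
  rw [shifted, shifted_succ, morganVoyceB, mul_sum, add_right_comm, ← sum_add_distrib]
  congr 1
  refine sum_congr rfl fun k _ ↦ ?_
  rw [show n + k + 2 = n + 1 + k + 1 by ring, show 2 * k + 2 = 2 * k + 1 + 1 by ring,
    Nat.choose_succ_succ', Nat.cast_add, show n + 1 + k = n + k + 1 by ring]
  ring

theorem morganVoyceB_succ (n : ℕ) :
    morganVoyceB x (n + 1) = morganVoyceB x n + morganVoyceb x (n + 1) := by
  rw [morganVoyceB, morganVoyceB_eq_sum_range x (N := n + 1 + 1) (by omega), morganVoyceb,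
    ← sum_add_distrib]
  refine sum_congr rfl fun k _ ↦ ?_
  rw [show n + 1 + 1 + k = n + 1 + k + 1 by ring, Nat.choose_succ_succ', Nat.cast_add]
  ring

theorem morganVoyceB_one : morganVoyceB x 1 = 2 + x := by
  rw [morganVoyceB_succ, morganVoyceb_succ, morganVoyceb_zero, morganVoyceB_zero]
  ring

theorem morganVoyceB_neg_two_add_two (n : ℕ) :
    morganVoyceB (-2 : R) (n + 2) = -morganVoyceB (-2 : R) n := by
  rw [morganVoyceB_succ _ (n + 1), morganVoyceb_succ _ (n + 1), morganVoyceB_succ _ n]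
  ring

theorem morganVoyceB_neg_two (n : ℕ) :
    morganVoyceB (-2 : R) n = if Even n then (-1) ^ (n / 2) else 0 := by
  induction n using Nat.twoStepInduction with
  | zero => simp
  | one => simp [morganVoyceB_one]
  | more n ih _ =>
    rw [morganVoyceB_neg_two_add_two, ih, Nat.add_div_right n two_pos]
    by_cases h : Even n <;> simp [h, Nat.even_add, pow_succ]

end MorganVoyce

theorem add_one_div_mul_choose_two_mul_add_two {K : Type*} [Field K] [CharZero K] (N k : ℕ) :
    (k + 1 : K) / (N + 1) * ((N + 1).choose (2 * k + 2) : K) = (N.choose (2 * k + 1) : K) / 2 := by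
  have h : ((N + 1 : ℕ) : K) * N.choose (2 * k + 1) =
      (N + 1).choose (2 * k + 2) * (2 * k + 2 : ℕ) := by
    exact_mod_cast Nat.add_one_mul_choose_eq N (2 * k + 1)
  push_cast at h
  field_simp
  linear_combination -h

theorem sum_range_pow_mul_div_mul_choose {K : Type*} [Field K] [CharZero K] (x : K) (n : ℕ) :
    ∑ k ∈ range (n + 1 + 1), x ^ k * (((n + 1 : ℕ) : K) / ((n + 1 : ℕ) + k)) *
        ((n + 1 + k).choose (n + 1 - k) : K) =
      morganVoyceb x (n + 1) - x / 2 * morganVoyceB x n := by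
  have split_ratio : ∀ k ∈ range (n + 1 + 1),
      x ^ k * (((n + 1 : ℕ) : K) / ((n + 1 : ℕ) + k)) * ((n + 1 + k).choose (n + 1 - k) : K) =
        x ^ k * ((n + 1 + k).choose (2 * k) : K) -
          x ^ k * ((k : K) / ((n + 1 : ℕ) + k) * ((n + 1 + k).choose (2 * k) : K)) := by
    intro k hk
    rw [Nat.choose_symm_of_eq_add (by simp at hk; omega : n + 1 + k = n + 1 - k + 2 * k)]
    have hpos : ((n + 1 : ℕ) : K) + k ≠ 0 := by
      rw [← Nat.cast_add]
      exact Nat.cast_ne_zero.mpr (by omega)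
    have one_sub : ((n + 1 : ℕ) : K) / ((n + 1 : ℕ) + k) = 1 - k / ((n + 1 : ℕ) + k) := by
      rw [eq_sub_iff_add_eq, ← add_div, div_self hpos]
    rw [one_sub]
    ring
  have halve : ∀ j : ℕ, x ^ (j + 1) * (((j + 1 : ℕ) : K) / ((n + 1 : ℕ) + (j + 1 : ℕ)) *
      ((n + 1 + (j + 1)).choose (2 * (j + 1)) : K)) =
        x / 2 * (x ^ j * ((n + 1 + j).choose (2 * j + 1) : K)) := by
    intro j
    have h := add_one_div_mul_choose_two_mul_add_two (K := K) (n + 1 + j) j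
    rw [show n + 1 + (j + 1) = n + 1 + j + 1 by ring, show 2 * (j + 1) = 2 * j + 2 by ring]
    push_cast at h ⊢
    rw [show (n : K) + 1 + (j + 1) = n + 1 + j + 1 by ring, h]
    ring
  rw [sum_congr rfl split_ratio, sum_sub_distrib,
    sum_range_succ'
      (fun k ↦ x ^ k * ((k : K) / ((n + 1 : ℕ) + k) * ((n + 1 + k).choose (2 * k) : K))),
    morganVoyceb, morganVoyceB, mul_sum]
  simp only [halve, CharP.cast_eq_zero, zero_div, zero_mul, mul_zero, add_zero]

theorem stmt_3 (n : ℕ) (hn : 0 < n) :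
    ∑ k ∈ range (n + 1), (-2 : ℚ) ^ k * ((n : ℚ) / (n + k)) *
      (Nat.choose (n + k) (n - k)) =
    if Even n then (-1 : ℚ) ^ (n / 2) else 0 := by
  obtain ⟨m, rfl⟩ : ∃ m, n = m + 1 := ⟨n - 1, by omega⟩
  rw [sum_range_pow_mul_div_mul_choose, ← morganVoyceB_neg_two, morganVoyceB_succ]
  ring
end

section
/- For every even nonzero integer p and every nonnegative integer n, T_n(L_p / 2) = L_{pn} / 2, where T_n is the Chebyshev polynomial of the first kind and L_m denotes the m-th Lucas number. -/
open Finset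

/-- Fibonacci numbers extended to all integers: `F_{-n} = (-1)^{n-1} F_n`. -/
def fibZ (n : ℤ) : ℤ :=
  if 0 ≤ n then Nat.fib n.toNat else (-1) ^ (n.natAbs + 1) * Nat.fib n.natAbs

/-- Lucas numbers extended to all integers: `L_n = F_{n-1} + F_{n+1}`. -/
def lucasZ (n : ℤ) : ℤ := fibZ (n - 1) + fibZ (n + 1)

open Real Polynomial
open scoped goldenRatio

/-!
Binet's formula gives `L_m = φ^m + ψ^m` with `φ ψ = -1`, so for even `p` the numbers `x = φ^p` and
`y = ψ^p` satisfy `x y = 1` and `L_p = x + y`. Through Dickson polynomials, `T_n((x + y)/2) =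
(x^n + y^n)/2` whenever `x y = 1`, and `x^n + y^n = L_{pn}`.
-/

theorem Polynomial.Chebyshev.T_eval_half_add_of_mul_eq_one {R : Type*} [CommRing R]
    [Invertible (2 : R)] {x y : R} (h : x * y = 1) (n : ℕ) :
    (Chebyshev.T R n).eval (⅟2 * (x + y)) = ⅟2 * (x ^ n + y ^ n) := by
  rw [chebyshev_T_eq_dickson_one_one, eval_mul, eval_C, eval_comp, eval_mul, eval_ofNat, eval_X,
    ← mul_assoc, mul_invOf_self, one_mul, dickson_one_one_eval_add_inv x y h]

theorem fibZ_eq_binet (n : ℤ) : (fibZ n : ℝ) = (φ ^ n - ψ ^ n) / √5 := by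
  rcases le_or_gt 0 n with hn | hn
  · lift n to ℕ using hn
    rw [fibZ, if_pos (Int.natCast_nonneg n), Int.toNat_natCast, zpow_natCast, zpow_natCast]
    exact_mod_cast coe_fib_eq n
  · obtain ⟨m, rfl⟩ : ∃ m : ℕ, n = -(m : ℤ) := ⟨n.natAbs, by omega⟩
    have hφ : φ ^ (-(m : ℤ)) = (-1) ^ m * ψ ^ m := by
      rw [zpow_neg, zpow_natCast, ← inv_pow, inv_goldenRatio, neg_pow]
    have hψ : ψ ^ (-(m : ℤ)) = (-1) ^ m * φ ^ m := by
      rw [zpow_neg, zpow_natCast, ← inv_pow, inv_goldenConj, neg_pow]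
    rw [fibZ, if_neg (by omega), Int.natAbs_neg, Int.natAbs_natCast, hφ, hψ]
    push_cast
    rw [coe_fib_eq m]
    ring

theorem lucasZ_eq_binet (n : ℤ) : (lucasZ n : ℝ) = φ ^ n + ψ ^ n := by
  rw [lucasZ, Int.cast_add, fibZ_eq_binet, fibZ_eq_binet, zpow_sub_one₀ goldenRatio_ne_zero,
    zpow_sub_one₀ goldenConj_ne_zero, zpow_add_one₀ goldenRatio_ne_zero,
    zpow_add_one₀ goldenConj_ne_zero, inv_goldenRatio, inv_goldenConj,
    ← goldenRatio_sub_goldenConj]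
  field_simp
  ring

theorem goldenRatio_zpow_mul_goldenConj_zpow_of_even {p : ℤ} (hp : Even p) :
    φ ^ p * ψ ^ p = 1 := by
  rw [← mul_zpow, goldenRatio_mul_goldenConj, hp.neg_one_zpow]

theorem stmt_5_general (p : ℤ) (hp : Even p) (n : ℕ) :
    (Polynomial.Chebyshev.T ℝ n).eval ((lucasZ p : ℝ) / 2) =
    (lucasZ (p * n) : ℝ) / 2 := by
  have h := Chebyshev.T_eval_half_add_of_mul_eq_one
    (goldenRatio_zpow_mul_goldenConj_zpow_of_even hp) n
  simp only [invOf_eq_inv, ← zpow_natCast, ← zpow_mul, inv_mul_eq_div] at h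
  rw [lucasZ_eq_binet, lucasZ_eq_binet, h]

theorem stmt_5 (p : ℤ) (hp : Even p) (hp0 : p ≠ 0) (n : ℕ) :
    (Polynomial.Chebyshev.T ℝ n).eval ((lucasZ p : ℝ) / 2) =
    (lucasZ (p * n) : ℝ) / 2 :=
  stmt_5_general p hp n
end

section
/- For every positive integer n and every integer p, the sum over k from 0 to n of (-1)^{(p-1)(n-k)} * (n/(n+k)) * C(n+k, n-k) * L_p^{2k} equals L_{2pn}/2, where L_m denotes the m-th Lucas number. -/
open Finset

/-!
With `ε = (-1)^(p-1)`, the numbers `u = ε φ^(2p)` and `v = ε ψ^(2p)` satisfy `u v = 1` and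
`u + v - 2 = ε L_p^2`. The sum is then, up to the sign `ε^n`, half of the classical expansion
`u^n + v^n = ∑ₖ (2n/(n+k)) C(n+k, 2k) (u + v - 2)^k`, valid whenever `u v = 1` because both
sides satisfy `xₙ₊₂ = (u + v) xₙ₊₁ - xₙ`; and `u^n + v^n = ε^n L_{2pn}`.
-/

open Real goldenRatio

/-- For `0 < n` this is `2n/(n+k) · C(n+k, 2k)`, the coefficient of `(u + v - 2)^k` in
`u^n + v^n` when `u v = 1`. -/
def lucasCoeff (n k : ℕ) : ℕ := (n + k).choose (2 * k) + (n + k - 1).choose (2 * k)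

namespace lucasCoeff

@[simp]
lemma zero_right (n : ℕ) : lucasCoeff n 0 = 2 := by simp [lucasCoeff]

lemma eq_zero_of_lt {n k : ℕ} (h : n < k) : lucasCoeff n k = 0 := by
  simp only [lucasCoeff, Nat.choose_eq_zero_of_lt (by omega : n + k < 2 * k),
    Nat.choose_eq_zero_of_lt (by omega : n + k - 1 < 2 * k)]

lemma succ_succ_add (n k : ℕ) :
    lucasCoeff (n + 2) (k + 1) + lucasCoeff n (k + 1) =
      lucasCoeff (n + 1) k + 2 * lucasCoeff (n + 1) (k + 1) := by
  simp only [lucasCoeff, show n + 2 + (k + 1) = n + k + 3 by ring,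
    show n + (k + 1) = n + k + 1 by ring, show n + 1 + k = n + k + 1 by ring,
    show n + 1 + (k + 1) = n + k + 2 by ring, show 2 * (k + 1) = 2 * k + 2 by ring,
    show n + k + 3 - 1 = n + k + 2 from rfl, show n + k + 2 - 1 = n + k + 1 from rfl,
    Nat.add_sub_cancel]
  have h₁ : (n + k + 3).choose (2 * k + 2) =
      (n + k + 2).choose (2 * k + 1) + (n + k + 2).choose (2 * k + 2) := Nat.choose_succ_succ' _ _
  have h₂ : (n + k + 2).choose (2 * k + 2) =
      (n + k + 1).choose (2 * k + 1) + (n + k + 1).choose (2 * k + 2) := Nat.choose_succ_succ' _ _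
  have h₃ : (n + k + 2).choose (2 * k + 1) =
      (n + k + 1).choose (2 * k) + (n + k + 1).choose (2 * k + 1) := Nat.choose_succ_succ' _ _
  have h₄ : (n + k + 1).choose (2 * k + 2) =
      (n + k).choose (2 * k + 1) + (n + k).choose (2 * k + 2) := Nat.choose_succ_succ' _ _
  have h₅ : (n + k + 1).choose (2 * k + 1) =
      (n + k).choose (2 * k) + (n + k).choose (2 * k + 1) := Nat.choose_succ_succ' _ _
  omega

lemma two_mul_mul_choose {n k : ℕ} (hk : k ≤ n) :
    2 * n * (n + k).choose (n - k) = (n + k) * lucasCoeff n k := by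
  rcases Nat.eq_zero_or_pos n with rfl | hn
  · obtain rfl : k = 0 := by omega
    rfl
  have hsymm : (n + k).choose (n - k) = (n + k).choose (2 * k) := by
    rw [← Nat.choose_symm (by omega : 2 * k ≤ n + k), show n + k - 2 * k = n - k by omega]
  have hpred : (n - k) * (n + k).choose (2 * k) = (n + k) * (n + k - 1).choose (2 * k) := by
    have h := Nat.choose_mul_succ_eq (n + k - 1) (2 * k)
    rw [Nat.sub_add_cancel (by omega), show n + k - 2 * k = n - k by omega] at h
    rw [mul_comm, ← h, mul_comm]
  rw [hsymm, lucasCoeff, show 2 * n = (n + k) + (n - k) by omega, add_mul, mul_add, hpred]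

end lucasCoeff

section PowAddPow

variable {R : Type*} [CommRing R]

lemma sum_lucasCoeff_mul_pow_of_le (w : R) {n N : ℕ} (h : n ≤ N) :
    ∑ k ∈ range (n + 1), (lucasCoeff n k : R) * w ^ k =
      ∑ k ∈ range (N + 1), (lucasCoeff n k : R) * w ^ k := by
  refine sum_subset (range_subset_range.2 (by omega)) fun k hkN hkn => ?_
  rw [lucasCoeff.eq_zero_of_lt (by simp_all), Nat.cast_zero, zero_mul]

lemma sum_lucasCoeff_mul_pow_succ_succ (w : R) (n : ℕ) :
    ∑ k ∈ range (n + 3), (lucasCoeff (n + 2) k : R) * w ^ k +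
        ∑ k ∈ range (n + 1), (lucasCoeff n k : R) * w ^ k =
      (w + 2) * ∑ k ∈ range (n + 2), (lucasCoeff (n + 1) k : R) * w ^ k := by
  have hconst : ∑ k ∈ range (n + 2), (lucasCoeff (n + 1) k : R) * w ^ k =
      ∑ j ∈ range (n + 2), (lucasCoeff (n + 1) (j + 1) : R) * w ^ (j + 1) + 2 := by
    rw [sum_lucasCoeff_mul_pow_of_le w (by omega : n + 1 ≤ n + 2), sum_range_succ']
    simp
  have hmul : w * ∑ k ∈ range (n + 2), (lucasCoeff (n + 1) k : R) * w ^ k =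
      ∑ j ∈ range (n + 2), (lucasCoeff (n + 1) j : R) * w ^ (j + 1) := by
    rw [mul_sum]
    exact sum_congr rfl fun j _ => by ring
  have hshift : ∑ j ∈ range (n + 2), ((lucasCoeff (n + 2) (j + 1) : R) * w ^ (j + 1) +
        (lucasCoeff n (j + 1) : R) * w ^ (j + 1)) =
      ∑ j ∈ range (n + 2), ((lucasCoeff (n + 1) j : R) * w ^ (j + 1) +
        2 * ((lucasCoeff (n + 1) (j + 1) : R) * w ^ (j + 1))) := by
    refine sum_congr rfl fun j _ => ?_
    have h := congrArg (Nat.cast : ℕ → R) (lucasCoeff.succ_succ_add n j)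
    push_cast at h
    linear_combination w ^ (j + 1) * h
  rw [sum_lucasCoeff_mul_pow_of_le w (by omega : n ≤ n + 2), ← sum_add_distrib, sum_range_succ',
    hshift, sum_add_distrib, ← mul_sum, add_mul, hmul, hconst]
  simp only [lucasCoeff.zero_right]
  push_cast
  ring

theorem sum_lucasCoeff_mul_pow {u v : R} (huv : u * v = 1) (n : ℕ) :
    ∑ k ∈ range (n + 1), (lucasCoeff n k : R) * (u + v - 2) ^ k = u ^ n + v ^ n := by
  induction n using Nat.twoStepInduction with
  | zero => norm_num
  | one => norm_num [sum_range_succ, lucasCoeff]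
  | more n ih₀ ih₁ =>
    have := sum_lucasCoeff_mul_pow_succ_succ (u + v - 2) n
    rw [ih₀, ih₁] at this
    linear_combination this + (u ^ n + v ^ n) * huv

end PowAddPow

lemma cast_div_mul_choose_eq {K : Type*} [Field K] [CharZero K] {n k : ℕ} (hn : 0 < n)
    (hk : k ≤ n) : (n / (n + k) : K) * (n + k).choose (n - k) = lucasCoeff n k / 2 := by
  have h := congrArg (Nat.cast : ℕ → K) (lucasCoeff.two_mul_mul_choose hk)
  push_cast at h
  have hnk : (n + k : K) ≠ 0 := by exact_mod_cast (show n + k ≠ 0 by omega)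
  field_simp
  linear_combination h

lemma neg_one_zpow_mul_self {K : Type*} [Field K] (m : ℤ) : (-1 : K) ^ m * (-1) ^ m = 1 := by
  rw [← mul_zpow]
  norm_num

lemma coe_fibZ_eq (m : ℤ) : (fibZ m : ℝ) = (φ ^ m - ψ ^ m) / √5 := by
  rcases le_or_gt 0 m with h | h
  · lift m to ℕ using h
    simp [fibZ, Real.coe_fib_eq]
  · obtain ⟨j, rfl⟩ : ∃ j : ℕ, m = -j := ⟨m.natAbs, by omega⟩
    rw [fibZ, if_neg (by omega), Int.natAbs_neg, Int.natAbs_natCast, zpow_neg, zpow_neg,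
      zpow_natCast, zpow_natCast, ← inv_pow, ← inv_pow, inv_goldenRatio, inv_goldenConj,
      neg_pow ψ, neg_pow φ]
    push_cast
    rw [Real.coe_fib_eq]
    ring

lemma coe_lucasZ_eq (m : ℤ) : (lucasZ m : ℝ) = φ ^ m + ψ ^ m := by
  rw [lucasZ, Int.cast_add, coe_fibZ_eq, coe_fibZ_eq, zpow_sub_one₀ goldenRatio_ne_zero,
    zpow_sub_one₀ goldenConj_ne_zero, zpow_add_one₀ goldenRatio_ne_zero,
    zpow_add_one₀ goldenConj_ne_zero, inv_goldenRatio, inv_goldenConj, ← add_div,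
    div_eq_iff (by positivity)]
  linear_combination (φ ^ m + ψ ^ m) * goldenRatio_sub_goldenConj

theorem sum_lucasCoeff_mul_pow_lucasZ_sq (p : ℤ) (n : ℕ) :
    ∑ k ∈ range (n + 1), (lucasCoeff n k : ℝ) * ((-1 : ℝ) ^ (p - 1) * lucasZ p ^ 2) ^ k =
      ((-1 : ℝ) ^ (p - 1)) ^ n * lucasZ (2 * p * n) := by
  set ε : ℝ := (-1) ^ (p - 1)
  have hεε : ε * ε = 1 := neg_one_zpow_mul_self _
  have hε : ε * (-1) ^ p = -1 := by
    rw [← zpow_add₀ (by norm_num)]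
    exact Odd.neg_one_zpow ⟨p - 1, by ring⟩
  have hφψ : φ ^ (2 * p) * ψ ^ (2 * p) = 1 := by
    rw [← mul_zpow, goldenRatio_mul_goldenConj, zpow_mul]
    norm_num
  have hsq : (lucasZ p : ℝ) ^ 2 = φ ^ (2 * p) + ψ ^ (2 * p) + 2 * (-1) ^ p := by
    rw [coe_lucasZ_eq, ← goldenRatio_mul_goldenConj, mul_zpow, mul_comm 2 p, zpow_mul, zpow_mul,
      zpow_two, zpow_two]
    ring
  have hw : ε * lucasZ p ^ 2 = ε * φ ^ (2 * p) + ε * ψ ^ (2 * p) - 2 := by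
    rw [hsq]
    linear_combination 2 * hε
  rw [hw, sum_lucasCoeff_mul_pow (by linear_combination φ ^ (2 * p) * ψ ^ (2 * p) * hεε + hφψ),
    coe_lucasZ_eq, mul_pow, mul_pow, ← zpow_natCast (φ ^ _), ← zpow_natCast (ψ ^ _), ← zpow_mul,
    ← zpow_mul]
  ring

theorem stmt_7 (n : ℕ) (hn : 0 < n) (p : ℤ) :
    ∑ k ∈ range (n + 1), (-1 : ℚ) ^ ((p - 1) * ((n : ℤ) - k)) *
      ((n : ℚ) / (n + k)) * (Nat.choose (n + k) (n - k)) * (lucasZ p : ℚ) ^ (2 * k) =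
    (lucasZ (2 * p * n) : ℚ) / 2 := by
  apply Rat.cast_injective (α := ℝ)
  push_cast
  set ε : ℝ := (-1) ^ (p - 1)
  have hεε : ε * ε = 1 := neg_one_zpow_mul_self _
  have hsign (k : ℕ) : (-1 : ℝ) ^ ((p - 1) * ((n : ℤ) - k)) = ε ^ n * ε ^ k := by
    rw [zpow_mul, zpow_sub₀ (left_ne_zero_of_mul_eq_one hεε), zpow_natCast, zpow_natCast,
      div_eq_mul_inv, ← inv_pow, inv_eq_of_mul_eq_one_right hεε]
  calc _ = ε ^ n / 2 * ∑ k ∈ range (n + 1), (lucasCoeff n k : ℝ) * (ε * lucasZ p ^ 2) ^ k := by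
        rw [mul_sum]
        refine sum_congr rfl fun k hk => ?_
        rw [hsign, mul_assoc (ε ^ n * ε ^ k),
          cast_div_mul_choose_eq hn (mem_range_succ_iff.mp hk)]
        ring
    _ = (ε * ε) ^ n * lucasZ (2 * p * n) / 2 := by
        rw [sum_lucasCoeff_mul_pow_lucasZ_sq]
        ring
    _ = lucasZ (2 * p * n) / 2 := by rw [hεε, one_pow, one_mul]
end

section
/- For every positive integer n, the sum over k from 0 to n of (n/(n+k)) * C(n+k, n-k) equals L_{2n}/2, where L_m is the m-th Lucas number. -/
open Finset

lemma fib_as_sum (m : ℕ) : Nat.fib (m + 1) = ∑ i ∈ range (m + 1), Nat.choose i (m - i) := by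
  rw [Nat.fib_succ_eq_sum_choose, Finset.Nat.sum_antidiagonal_eq_sum_range_succ_mk]

lemma sumA (n : ℕ) : ∑ k ∈ range (n + 1), Nat.choose (n + k) (n - k) = Nat.fib (2 * n + 1) := by
  have h : Nat.fib (2 * n + 1) = ∑ i ∈ range (n + (n + 1)), Nat.choose i (2 * n - i) := by
    rw [fib_as_sum]
    have e : n + (n + 1) = 2 * n + 1 := by omega
    rw [e]
  rw [h]; conv_rhs => rw [Finset.sum_range_add]
  have h1 : ∑ i ∈ range n, Nat.choose i (2 * n - i) = 0 := by
    apply Finset.sum_eq_zero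
    intro i hi
    simp only [mem_range] at hi
    exact Nat.choose_eq_zero_of_lt (by omega)
  rw [h1, zero_add]
  apply Finset.sum_congr rfl
  intro k hk
  congr 1
  omega

lemma sumB (n : ℕ) (hn : 0 < n) :
    ∑ k ∈ range n, Nat.choose (n + k) (n - 1 - k) = Nat.fib (2 * n) := by
  have h : Nat.fib (2 * n) = ∑ i ∈ range (n + n), Nat.choose i (2 * n - 1 - i) := by
    have h2 : 2 * n = (2 * n - 1) + 1 := by omega
    rw [h2, fib_as_sum]
    have e : n + n = 2 * n - 1 + 1 := by omega
    rw [e]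
    simp
  rw [h]; conv_rhs => rw [Finset.sum_range_add]
  have h1 : ∑ i ∈ range n, Nat.choose i (2 * n - 1 - i) = 0 := by
    apply Finset.sum_eq_zero
    intro i hi
    simp only [mem_range] at hi
    exact Nat.choose_eq_zero_of_lt (by omega)
  rw [h1, zero_add]
  apply Finset.sum_congr rfl
  intro k hk
  congr 1
  omega

lemma termNat (n k : ℕ) (hk : k ≤ n) :
    2 * k * Nat.choose (n + k) (n - k) = (n + k) * Nat.choose (n + k - 1) (n - k) := by
  rcases Nat.eq_zero_or_pos k with rfl | hk1
  · rcases Nat.eq_zero_or_pos n with rfl | hn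
    · simp
    · simp [Nat.choose_eq_zero_of_lt (show n - 1 < n by omega)]
  · have e1 : Nat.choose (n + k) (n - k) = Nat.choose (n + k) (2 * k) := by
      rw [← Nat.choose_symm (by omega : 2 * k ≤ n + k)]; congr 1; omega
    have e2 : Nat.choose (n + k - 1) (n - k) = Nat.choose (n + k - 1) (2 * k - 1) := by
      rw [← Nat.choose_symm (by omega : 2 * k - 1 ≤ n + k - 1)]; congr 1; omega
    rw [e1, e2]
    have := Nat.add_one_mul_choose_eq (n + k - 1) (2 * k - 1)
    have h1 : n + k - 1 + 1 = n + k := by omega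
    have h2 : 2 * k - 1 + 1 = 2 * k := by omega
    rw [h1, h2] at this
    rw [this]; ring

theorem stmt_9 (n : ℕ) (hn : 0 < n) :
    ∑ k ∈ range (n + 1), ((n : ℚ) / (n + k)) * (Nat.choose (n + k) (n - k)) =
    (lucasZ (2 * n) : ℚ) / 2 := by
  have hterm : ∀ k ∈ range (n + 1),
      ((n : ℚ) / (n + k)) * (Nat.choose (n + k) (n - k)) =
      (Nat.choose (n + k) (n - k) : ℚ) - (1/2) * (Nat.choose (n + k - 1) (n - k) : ℚ) := by
    intro k hk
    simp only [mem_range] at hk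
    have hk' : k ≤ n := by omega
    have hNat := termNat n k hk'
    have hQ : (2 * k : ℚ) * (Nat.choose (n + k) (n - k) : ℚ)
        = ((n : ℚ) + k) * (Nat.choose (n + k - 1) (n - k) : ℚ) := by
      exact_mod_cast congrArg (Nat.cast : ℕ → ℚ) hNat
    have hpos : (n : ℚ) + k ≠ 0 := by positivity
    field_simp
    linear_combination -hQ
  rw [Finset.sum_congr rfl hterm, Finset.sum_sub_distrib]
  have hA : ∑ k ∈ range (n + 1), (Nat.choose (n + k) (n - k) : ℚ) = (Nat.fib (2 * n + 1) : ℚ) := by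
    exact_mod_cast congrArg (Nat.cast : ℕ → ℚ) (sumA n)
  have hB : ∑ k ∈ range (n + 1), (1/2 : ℚ) * (Nat.choose (n + k - 1) (n - k) : ℚ)
      = (Nat.fib (2 * n) : ℚ) / 2 := by
    rw [Finset.sum_range_succ']
    have e0 : (Nat.choose (n + 0 - 1) (n - 0) : ℚ) = 0 := by
      rw [Nat.choose_eq_zero_of_lt (by omega)]; simp
    rw [e0]
    have e1 : ∀ j, (1/2 : ℚ) * (Nat.choose (n + (j+1) - 1) (n - (j+1)) : ℚ)
        = (1/2 : ℚ) * (Nat.choose (n + j) (n - 1 - j) : ℚ) := by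
      intro j
      have a1 : n + (j+1) - 1 = n + j := by omega
      have a2 : n - (j+1) = n - 1 - j := by omega
      rw [a1, a2]
    rw [Finset.sum_congr rfl (fun j _ => e1 j), ← Finset.mul_sum]
    have := sumB n hn
    rw [show ∑ j ∈ range n, (Nat.choose (n + j) (n - 1 - j) : ℚ)
        = (Nat.fib (2*n) : ℚ) by exact_mod_cast congrArg (Nat.cast : ℕ → ℚ) this]
    ring
  rw [hA, hB]
  have hl : (lucasZ (2 * n) : ℤ) = Nat.fib (2 * n - 1) + Nat.fib (2 * n + 1) := by
    unfold lucasZ fibZ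
    rw [if_pos (by omega), if_pos (by omega)]
    rw [show (2 * (n:ℤ) - 1).toNat = 2*n - 1 from by omega,
        show (2 * (n:ℤ) + 1).toNat = 2*n + 1 from by omega]
  have hfib : Nat.fib (2 * n + 1) = Nat.fib (2 * n) + Nat.fib (2 * n - 1) := by
    have := Nat.fib_add_two (n := 2 * n - 1)
    have e : 2 * n - 1 + 2 = 2 * n + 1 := by omega
    have e2 : 2 * n - 1 + 1 = 2 * n := by omega
    rw [e, e2] at this
    omega
  rw [show ((lucasZ (2 * n) : ℤ) : ℚ) = ((Nat.fib (2*n-1) : ℚ) + (Nat.fib (2*n+1) : ℚ)) by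
    exact_mod_cast congrArg (Int.cast : ℤ → ℚ) hl]
  have : (Nat.fib (2*n+1) : ℚ) = (Nat.fib (2*n) : ℚ) + (Nat.fib (2*n-1) : ℚ) := by
    exact_mod_cast congrArg (Nat.cast : ℕ → ℚ) hfib
  linarith
end

section
/- For every positive integer n, the sum over k from 0 to n of (n/(n+k)) * C(n+k, n-k) * 5^k equals L_{4n}/2, where L_m is the m-th Lucas number. -/
open Finset

/-!
Since `C(n+k, n-k) = C(n+k, 2k)` and `(n+k) C(n+k-1, 2k) = (n-k) C(n+k, 2k)`, the summand is
`(C(n+k, 2k) + C(n+k-1, 2k)) 5^k / 2`, so the sum is `(b_n(5) + b_{n-1}(5)) / 2` for the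
Morgan–Voyce polynomial `b_n(x) = ∑ C(n+k, 2k) x^k`. Pascal's rule gives
`b_{n+2} = (x+2) b_{n+1} - b_n`, which at `x = 5` is `u_{n+2} = 7 u_{n+1} - u_n`. Since `L_4 = 7`,
the sequence `L_{4n}` satisfies the same recurrence, and the two agree at `n = 1, 2`.
-/

namespace MorganVoyce

variable {R : Type*} [CommRing R] (x : R)

def b (n : ℕ) : R := ∑ k ∈ range (n + 1), ((n + k).choose (2 * k) : R) * x ^ k

def B (n : ℕ) : R := ∑ k ∈ range (n + 1), ((n + 1 + k).choose (2 * k + 1) : R) * x ^ k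

theorem B_succ (n : ℕ) : B x (n + 1) = B x n + b x (n + 1) := by
  have pascal : ∀ k, ((n + 1 + 1 + k).choose (2 * k + 1) : R) =
      (n + 1 + k).choose (2 * k) + (n + 1 + k).choose (2 * k + 1) := fun k => by
    rw [show n + 1 + 1 + k = n + 1 + k + 1 by ring, Nat.choose_succ_succ']
    push_cast; rfl
  have last : (n + 1 + (n + 1)).choose (2 * (n + 1) + 1) = 0 :=
    Nat.choose_eq_zero_of_lt (by omega)
  simp only [B, b, pascal, add_mul, sum_add_distrib]
  rw [sum_range_succ (fun k => ((n + 1 + k).choose (2 * k + 1) : R) * x ^ k), last]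
  simp only [Nat.cast_zero, zero_mul, add_zero]
  ring

theorem b_succ (n : ℕ) : b x (n + 1) = b x n + x * B x n := by
  have hb₁ : b x (n + 1) = ∑ k ∈ range (n + 1),
      (((n + 1 + k).choose (2 * k + 1) : R) + (n + 1 + k).choose (2 * k + 2)) * x ^ (k + 1)
        + 1 := by
    rw [b, sum_range_succ']
    congr 1
    · refine sum_congr rfl fun k _ => ?_
      rw [show n + 1 + (k + 1) = n + 1 + k + 1 by ring, show 2 * (k + 1) = 2 * k + 1 + 1 by ring,
        Nat.choose_succ_succ']
      push_cast; rfl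
    · simp
  have hb₀ : b x n =
      ∑ k ∈ range (n + 1), ((n + 1 + k).choose (2 * k + 2) : R) * x ^ (k + 1) + 1 := by
    have last : (n + 1 + n).choose (2 * n + 2) = 0 := Nat.choose_eq_zero_of_lt (by omega)
    rw [b, sum_range_succ', sum_range_succ, last]
    simp only [Nat.cast_zero, zero_mul, add_zero, mul_zero, Nat.choose_zero_right, Nat.cast_one,
      pow_zero, mul_one]
    congr 1
    exact sum_congr rfl fun k _ => by ring_nf
  rw [hb₁, hb₀, B, mul_sum, add_right_comm, ← sum_add_distrib]
  congr 1
  exact sum_congr rfl fun k _ => by ring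

theorem b_add_two (n : ℕ) : b x (n + 2) = (2 + x) * b x (n + 1) - b x n := by
  linear_combination b_succ x (n + 1) + x * B_succ x n - b_succ x n

end MorganVoyce

theorem eq_of_two_step_recurrence {R : Type*} [CommRing R] {u v : ℕ → R} (a c : R)
    (hu : ∀ n, u (n + 2) = a * u (n + 1) + c * u n)
    (hv : ∀ n, v (n + 2) = a * v (n + 1) + c * v n) (h₀ : u 0 = v 0) (h₁ : u 1 = v 1) :
    u = v := by
  funext n
  induction n using Nat.twoStepInduction with
  | zero => exact h₀
  | one => exact h₁
  | more n ih₀ ih₁ => rw [hu, hv, ih₀, ih₁]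

theorem add_eight_eq_of_fib_recurrence {R : Type*} [CommRing R] {u : ℕ → R}
    (hu : ∀ n, u (n + 2) = u (n + 1) + u n) (n : ℕ) : u (n + 8) = 7 * u (n + 4) - u n := by
  -- `X^8 - 7 X^4 + 1 = (X^2 - X - 1) (X^6 + X^5 + 2 X^4 + 3 X^3 - 2 X^2 + X - 1)`
  linear_combination hu (n + 6) + hu (n + 5) + 2 * hu (n + 4) + 3 * hu (n + 3) - 2 * hu (n + 2)
    + hu (n + 1) - hu n

theorem fibZ_natCast (j : ℕ) : fibZ j = Nat.fib j := by
  simp [fibZ]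

theorem lucasZ_natCast_add_one (j : ℕ) : lucasZ (j + 1) = Nat.fib j + Nat.fib (j + 2) := by
  rw [lucasZ, add_sub_cancel_right, add_assoc, one_add_one_eq_two]
  exact_mod_cast congrArg₂ (· + ·) (fibZ_natCast j) (fibZ_natCast (j + 2))

theorem cast_lucasZ_four_mul_succ {R : Type*} [CommRing R] (m : ℕ) :
    (lucasZ (4 * (m + 1 : ℕ)) : R) = MorganVoyce.b 5 (m + 1) + MorganVoyce.b 5 m := by
  set ℓ : ℕ → R := fun j => Nat.fib j + Nat.fib (j + 2)
  have hℓ : ∀ j, ℓ (j + 2) = ℓ (j + 1) + ℓ j := fun j => by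
    simp only [ℓ, Nat.fib_add_two, Nat.cast_add]; ring
  have hseq : (fun m => ℓ (4 * m + 3)) =
      fun m => MorganVoyce.b (5 : R) (m + 1) + MorganVoyce.b 5 m := by
    refine eq_of_two_step_recurrence 7 (-1) (fun m => ?_) (fun m => ?_) ?_ ?_
    · rw [show 4 * (m + 2) + 3 = 4 * m + 3 + 8 by ring, add_eight_eq_of_fib_recurrence hℓ,
        show 4 * (m + 1) + 3 = 4 * m + 3 + 4 by ring]
      ring
    · rw [MorganVoyce.b_add_two, MorganVoyce.b_add_two]
      ring
    · norm_num [ℓ, MorganVoyce.b, sum_range_succ, Nat.fib_add_two]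
    · norm_num [ℓ, MorganVoyce.b, sum_range_succ, Nat.fib_add_two]
  rw [show (4 * (m + 1 : ℕ) : ℤ) = (4 * m + 3 : ℕ) + 1 by push_cast; ring,
    lucasZ_natCast_add_one]
  push_cast
  exact congrFun hseq m

theorem div_add_mul_choose_eq {K : Type*} [Field K] [CharZero K] {m k : ℕ} (hk : k ≤ m + 1) :
    ((m + 1 : ℕ) : K) / ((m + 1 : ℕ) + k) * (m + 1 + k).choose (m + 1 - k) =
      (((m + 1 + k).choose (2 * k) : K) + (m + k).choose (2 * k)) / 2 := by
  have hsymm : (m + 1 + k).choose (m + 1 - k) = (m + 1 + k).choose (2 * k) :=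
    Nat.choose_symm_of_eq_add (by omega)
  have hrec : ((m + k).choose (2 * k) : K) * (m + 1 + k) =
      (m + 1 + k).choose (2 * k) * (m + 1 - k) := by
    have h := Nat.choose_mul_succ_eq (m + k) (2 * k)
    rw [show m + k + 1 = m + 1 + k by ring, show m + 1 + k - 2 * k = m + 1 - k by omega] at h
    exact_mod_cast h
  have hne : ((m + 1 : ℕ) : K) + k ≠ 0 := by exact_mod_cast (by omega : m + 1 + k ≠ 0)
  rw [hsymm]
  field_simp
  push_cast
  linear_combination -hrec

theorem sum_div_add_mul_choose_mul_pow {K : Type*} [Field K] [CharZero K] (x : K) (m : ℕ) :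
    ∑ k ∈ range (m + 1 + 1),
        ((m + 1 : ℕ) : K) / ((m + 1 : ℕ) + k) * (m + 1 + k).choose (m + 1 - k) * x ^ k =
      (MorganVoyce.b x (m + 1) + MorganVoyce.b x m) / 2 := by
  have hb : MorganVoyce.b x m =
      ∑ k ∈ range (m + 1 + 1), ((m + k).choose (2 * k) : K) * x ^ k := by
    rw [sum_range_succ, Nat.choose_eq_zero_of_lt (by omega : m + (m + 1) < 2 * (m + 1)),
      Nat.cast_zero, zero_mul, add_zero, MorganVoyce.b]
  rw [hb, MorganVoyce.b, ← sum_add_distrib, sum_div]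
  refine sum_congr rfl fun k hk => ?_
  rw [div_add_mul_choose_eq (Nat.lt_succ_iff.mp (mem_range.mp hk))]
  ring

theorem stmt_10 (n : ℕ) (hn : 0 < n) :
    ∑ k ∈ range (n + 1), ((n : ℚ) / (n + k)) * (Nat.choose (n + k) (n - k)) * 5 ^ k =
    (lucasZ (4 * n) : ℚ) / 2 := by
  obtain ⟨m, rfl⟩ := Nat.exists_eq_add_one_of_ne_zero hn.ne'
  rw [sum_div_add_mul_choose_mul_pow, cast_lucasZ_four_mul_succ]
end

section
/- For every positive integer n, the sum over k from 0 to n of (16/5)^k * (n/(n+k)) * C(n+k, n-k) equals (25^n + 1)/(2·5^n). -/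
/-!
Put `x = t + t⁻¹ - 2`. The Morgan–Voyce polynomials `bₙ(x) = ∑ₖ C(n+k, 2k) xᵏ` satisfy
`bₙ₊₂ = (t + t⁻¹) bₙ₊₁ - bₙ` (a second difference of Pascal's rule), and so does
`t^(n+1) + t^-(n+1)`; comparing initial values gives `bₙ₊₁ + bₙ = t^(n+1) + t^-(n+1)`.
On the other hand `n/(n+k) · C(n+k, 2k) = (C(n+k, 2k) + C(n-1+k, 2k))/2`, so the sum equals
`(bₙ + bₙ₋₁)/2 = (tⁿ + t⁻ⁿ)/2`.
The theorem is the case `t = 5`, where `x = 16/5`.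
-/

open Finset

lemma Nat.cast_choose_second_difference {R : Type*} [CommRing R] (m j : ℕ) :
    ((m + 2).choose (j + 2) : R) - 2 * (m + 1).choose (j + 2) + m.choose (j + 2) =
      m.choose j := by
  simp only [Nat.choose_succ_succ, Nat.cast_add]
  ring

lemma eq_of_linearRecurrence_two {R : Type*} [CommRing R] (s : R) {u v : ℕ → R}
    (hu : ∀ n, u (n + 2) = s * u (n + 1) - u n) (hv : ∀ n, v (n + 2) = s * v (n + 1) - v n)
    (h₀ : u 0 = v 0) (h₁ : u 1 = v 1) (n : ℕ) : u n = v n := by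
  induction n using Nat.twoStepInduction with
  | zero => exact h₀
  | one => exact h₁
  | more n ih₀ ih₁ => rw [hu, hv, ih₀, ih₁]

section MorganVoyce

variable {R : Type*} [CommRing R] (x : R)

/-- The Morgan–Voyce polynomial `b n x = ∑ₖ C(n+k, n-k) xᵏ`, written with `C(n+k, 2k)`. -/
def morganVoyce (n : ℕ) : R :=
  ∑ k ∈ range (n + 1), x ^ k * ((n + k).choose (2 * k) : R)

@[simp]
lemma morganVoyce_zero : morganVoyce x 0 = 1 := by
  simp [morganVoyce]

@[simp]
lemma morganVoyce_one : morganVoyce x 1 = 1 + x := by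
  simp [morganVoyce, sum_range_succ]

lemma morganVoyce_eq_sum_range {n m : ℕ} (h : n < m) :
    morganVoyce x n = ∑ k ∈ range m, x ^ k * ((n + k).choose (2 * k) : R) := by
  refine sum_subset (range_subset_range.2 h) fun k _ hk => ?_
  rw [mem_range, not_lt] at hk
  rw [Nat.choose_eq_zero_of_lt (by omega), Nat.cast_zero, mul_zero]

lemma morganVoyce_add_two (n : ℕ) :
    morganVoyce x (n + 2) = (2 + x) * morganVoyce x (n + 1) - morganVoyce x n := by
  suffices morganVoyce x (n + 2) - 2 * morganVoyce x (n + 1) + morganVoyce x n =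
      x * morganVoyce x (n + 1) by linear_combination this
  calc morganVoyce x (n + 2) - 2 * morganVoyce x (n + 1) + morganVoyce x n
      = ∑ k ∈ range (n + 3), x ^ k * (((n + 2 + k).choose (2 * k) : R)
          - 2 * (n + 1 + k).choose (2 * k) + (n + k).choose (2 * k)) := by
        rw [morganVoyce_eq_sum_range x (by omega : n + 2 < n + 3),
          morganVoyce_eq_sum_range x (by omega : n + 1 < n + 3),
          morganVoyce_eq_sum_range x (by omega : n < n + 3), mul_sum, ← sum_sub_distrib,
          ← sum_add_distrib]
        exact sum_congr rfl fun k _ => by ring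
    _ = ∑ k ∈ range (n + 2), x ^ (k + 1) * ((n + 1 + k).choose (2 * k) : R) := by
        rw [sum_range_succ', mul_zero, Nat.choose_zero_right, Nat.choose_zero_right,
          Nat.choose_zero_right, Nat.cast_one, show (1 : R) - 2 * 1 + 1 = 0 by ring, mul_zero,
          add_zero]
        refine sum_congr rfl fun k _ => ?_
        rw [← Nat.cast_choose_second_difference (n + 1 + k) (2 * k)]
        ring_nf
    _ = x * morganVoyce x (n + 1) := by
        rw [morganVoyce, mul_sum]
        exact sum_congr rfl fun k _ => by ring

end MorganVoyce

lemma morganVoyce_add_one_add_morganVoyce {K : Type*} [Field K] {t : K} (ht : t ≠ 0) (n : ℕ) :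
    morganVoyce (t + t⁻¹ - 2) (n + 1) + morganVoyce (t + t⁻¹ - 2) n =
      t ^ (n + 1) + t⁻¹ ^ (n + 1) := by
  have htt : t * t⁻¹ = 1 := mul_inv_cancel₀ ht
  refine eq_of_linearRecurrence_two (t + t⁻¹)
    (u := fun n => morganVoyce (t + t⁻¹ - 2) (n + 1) + morganVoyce (t + t⁻¹ - 2) n)
    (v := fun n => t ^ (n + 1) + t⁻¹ ^ (n + 1)) (fun n => ?_) (fun n => ?_) ?_ ?_ n
  · simp only [morganVoyce_add_two]; ring
  · linear_combination -(t ^ (n + 1) + t⁻¹ ^ (n + 1)) * htt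
  · simp only [zero_add, morganVoyce_zero, morganVoyce_one]
    ring
  · simp only [morganVoyce_add_two _ 0, zero_add, morganVoyce_zero, morganVoyce_one]
    linear_combination 2 * htt

lemma cast_div_mul_choose_eq_half_add {K : Type*} [Field K] [CharZero K] {m k : ℕ}
    (hk : k ≤ m + 1) :
    ((m + 1 : ℕ) : K) / ((m + 1 : ℕ) + k) * ((m + 1 + k).choose (m + 1 - k) : K) =
      (((m + 1 + k).choose (2 * k) : K) + (m + k).choose (2 * k)) / 2 := by
  rw [Nat.choose_symm_of_eq_add (by omega : m + 1 + k = (m + 1 - k) + 2 * k)]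
  have hrec : ((m + k).choose (2 * k) : K) * (m + 1 + k) =
      (m + 1 + k).choose (2 * k) * ((m + 1 : ℕ) - k : K) := by
    rw [← Nat.cast_sub hk]
    have := Nat.choose_mul_succ_eq (m + k) (2 * k)
    rw [show m + k + 1 - 2 * k = m + 1 - k by omega, show m + k + 1 = m + 1 + k by omega] at this
    exact_mod_cast this
  have hpos : ((m + 1 + k : ℕ) : K) ≠ 0 := Nat.cast_ne_zero.2 (by omega)
  push_cast at hrec hpos ⊢
  field_simp
  linear_combination -hrec

theorem sum_pow_mul_div_mul_choose_eq {K : Type*} [Field K] [CharZero K] {t : K} (ht : t ≠ 0)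
    {n : ℕ} (hn : 0 < n) :
    ∑ k ∈ range (n + 1), (t + t⁻¹ - 2) ^ k * ((n : K) / (n + k)) * (n + k).choose (n - k) =
      (t ^ n + t⁻¹ ^ n) / 2 := by
  obtain ⟨m, rfl⟩ : ∃ m, n = m + 1 := ⟨n - 1, by omega⟩
  calc _ = ∑ k ∈ range (m + 2), (t + t⁻¹ - 2) ^ k *
        ((((m + 1 + k).choose (2 * k) : K) + (m + k).choose (2 * k)) / 2) :=
        sum_congr rfl fun k hk => by
          rw [mul_assoc, cast_div_mul_choose_eq_half_add (by rw [mem_range] at hk; omega)]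
    _ = (morganVoyce (t + t⁻¹ - 2) (m + 1) + morganVoyce (t + t⁻¹ - 2) m) / 2 := by
        rw [morganVoyce_eq_sum_range _ (by omega : m < m + 2), morganVoyce, ← sum_add_distrib,
          sum_div]
        exact sum_congr rfl fun k _ => by ring
    _ = (t ^ (m + 1) + t⁻¹ ^ (m + 1)) / 2 := by rw [morganVoyce_add_one_add_morganVoyce ht]

theorem stmt_11 (n : ℕ) (hn : 0 < n) :
    ∑ k ∈ range (n + 1), ((16 : ℚ) / 5) ^ k * ((n : ℚ) / (n + k)) *
      (Nat.choose (n + k) (n - k)) =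
    ((25 : ℚ) ^ n + 1) / (2 * 5 ^ n) := by
  have h := sum_pow_mul_div_mul_choose_eq (by norm_num : (5 : ℚ) ≠ 0) hn
  rw [show (5 : ℚ) + 5⁻¹ - 2 = 16 / 5 by norm_num] at h
  rw [h, inv_pow, show (25 : ℚ) ^ n = 5 ^ n * 5 ^ n by rw [← mul_pow]; norm_num]
  field_simp
end

section
/- For every positive integer n, the sum over k from 0 to n of (-1)^{n-k} * (36/5)^k * (n/(n+k)) * C(n+k, n-k) equals (25^n + 1)/(2·5^n). -/
open Finset Nat

def AA (n k : ℕ) : ℚ :=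
  if k ≤ n then (n : ℚ) / ((n : ℚ) + k) * (Nat.choose (n + k) (n - k)) else 0

lemma key (k d : ℕ) :
    AA (k+1+d+2) (k+1) + AA (k+1+d) (k+1) - 2 * AA (k+1+d+1) (k+1) = AA (k+1+d+1) k := by
  simp only [AA, if_pos (show k+1 ≤ k+1+d+2 by omega), if_pos (show k+1 ≤ k+1+d by omega),
    if_pos (show k+1 ≤ k+1+d+1 by omega), if_pos (show k ≤ k+1+d+1 by omega)]
  rw [show (k+1+d+2) + (k+1) = 2*k+d+4 by ring, show (k+1+d+2) - (k+1) = d+2 by omega,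
      show (k+1+d) + (k+1) = 2*k+d+2 by ring, show (k+1+d) - (k+1) = d by omega,
      show (k+1+d+1) + (k+1) = 2*k+d+3 by ring, show (k+1+d+1) - (k+1) = d+1 by omega,
      show (k+1+d+1) + k = 2*k+d+2 by ring, show (k+1+d+1) - k = d+2 by omega]
  rw [Nat.cast_choose ℚ (show d+2 ≤ 2*k+d+4 by omega),
      Nat.cast_choose ℚ (show d ≤ 2*k+d+2 by omega),
      Nat.cast_choose ℚ (show d+1 ≤ 2*k+d+3 by omega),
      Nat.cast_choose ℚ (show d+2 ≤ 2*k+d+2 by omega)]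
  rw [show 2*k+d+4 - (d+2) = 2*k+2 by omega, show 2*k+d+2 - d = 2*k+2 by omega,
      show 2*k+d+3 - (d+1) = 2*k+2 by omega, show 2*k+d+2 - (d+2) = 2*k by omega]
  have e1 : ((2*k+d+4)! : ℚ) = (2*k+d+4) * (2*k+d+3) * ((2*k+d+2)!) := by
    rw [show 2*k+d+4 = (2*k+d+3)+1 by ring, Nat.factorial_succ,
        show 2*k+d+3 = (2*k+d+2)+1 by ring, Nat.factorial_succ]
    push_cast; ring
  have e2 : ((2*k+d+3)! : ℚ) = (2*k+d+3) * ((2*k+d+2)!) := by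
    rw [show 2*k+d+3 = (2*k+d+2)+1 by ring, Nat.factorial_succ]; push_cast; ring
  have e3 : ((d+2)! : ℚ) = (d+2) * (d+1) * (d !) := by
    rw [show d+2 = (d+1)+1 by ring, Nat.factorial_succ, Nat.factorial_succ]; push_cast; ring
  have e4 : ((d+1)! : ℚ) = (d+1) * (d !) := by
    rw [Nat.factorial_succ]; push_cast; ring
  have e5 : ((2*k+2)! : ℚ) = (2*k+2) * (2*k+1) * ((2*k)!) := by
    rw [show 2*k+2 = (2*k+1)+1 by ring, Nat.factorial_succ,
        show 2*k+1 = (2*k)+1 by rfl, Nat.factorial_succ]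
    push_cast; ring
  rw [e1, e2, e3, e4, e5]
  have h1 : ((2*k+d+2)! : ℚ) ≠ 0 := by positivity
  have h2 : ((d)! : ℚ) ≠ 0 := by positivity
  have h3 : ((2*k)! : ℚ) ≠ 0 := by positivity
  have h4 : ((k:ℚ)+1+d+2) + (k+1) ≠ 0 := by positivity
  have h5 : ((k:ℚ)+1+d) + (k+1) ≠ 0 := by positivity
  have h6 : ((k:ℚ)+1+d+1) + (k+1) ≠ 0 := by positivity
  have h7 : ((k:ℚ)+1+d+1) + k ≠ 0 := by positivity
  push_cast
  field_simp
  ring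

def SS (n : ℕ) : ℚ :=
  ∑ k ∈ range (n + 1), (-1 : ℚ) ^ (n - k) * ((36 : ℚ) / 5) ^ k *
      ((n : ℚ) / (n + k)) * (Nat.choose (n + k) (n - k))

lemma AA_of_gt {n k : ℕ} (h : n < k) : AA n k = 0 := by
  simp [AA, Nat.not_le.mpr h]

lemma AA_zero_right {n : ℕ} (h : 0 < n) : AA n 0 = 1 := by
  have : (n:ℚ) ≠ 0 := by exact_mod_cast h.ne'
  simp [AA, this]

lemma AA_self {n : ℕ} (h : 0 < n) : AA n n = 1/2 := by
  have h0 : (n:ℚ) ≠ 0 := by exact_mod_cast h.ne'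
  simp only [AA, if_pos le_rfl, Nat.sub_self, Nat.choose_zero_right]
  push_cast
  field_simp
  ring

lemma AA_succ_self (n : ℕ) : AA (n+1) n = (n:ℚ) + 1 := by
  simp only [AA, if_pos (by omega : n ≤ n+1), show n+1+n = 2*n+1 by ring,
    show n+1-n = 1 by omega, Nat.choose_one_right]
  have h : ((n:ℚ)+1) + n ≠ 0 := by positivity
  push_cast
  rw [div_mul_eq_mul_div, div_eq_iff h]
  ring

lemma SS_eq (n m : ℕ) (h : n + 1 ≤ m) :
    SS n = ∑ k ∈ range m, (-1 : ℚ) ^ (n - k) * ((36 : ℚ) / 5) ^ k * AA n k := by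
  have h1 : SS n = ∑ k ∈ range (n+1), (-1 : ℚ) ^ (n - k) * ((36 : ℚ) / 5) ^ k * AA n k := by
    rw [SS]
    apply Finset.sum_congr rfl
    intro k hk
    have hk2 : k ≤ n := Nat.lt_succ_iff.mp (Finset.mem_range.mp hk)
    rw [AA, if_pos hk2]
    ring
  rw [h1]
  apply Finset.sum_subset (Finset.range_subset_range.mpr h)
  intro k _ hk
  have : n < k := by
    have := Finset.mem_range.not.mp hk
    omega
  rw [AA_of_gt this]
  ring

lemma SS_rec (n : ℕ) (hn : 1 ≤ n) :
    SS (n+2) + SS n + 2 * SS (n+1) = (36/5) * SS (n+1) := by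
  have hR : (36/5 : ℚ) * SS (n+1) =
      ∑ k ∈ range (n+2), (36/5 : ℚ) *
        ((-1 : ℚ) ^ (n+1-k) * ((36 : ℚ) / 5) ^ k * AA (n+1) k) := by
    rw [SS_eq (n+1) (n+2) le_rfl, Finset.mul_sum]
  have hL : SS (n+2) + SS n + 2 * SS (n+1) =
      ∑ k ∈ range (n+3),
        ((-1 : ℚ) ^ (n+2-k) * ((36 : ℚ) / 5) ^ k * AA (n+2) k
         + (-1 : ℚ) ^ (n-k) * ((36 : ℚ) / 5) ^ k * AA n k
         + 2 * ((-1 : ℚ) ^ (n+1-k) * ((36 : ℚ) / 5) ^ k * AA (n+1) k)) := by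
    rw [SS_eq (n+2) (n+3) le_rfl, SS_eq n (n+3) (by omega), SS_eq (n+1) (n+3) (by omega),
        Finset.mul_sum, ← Finset.sum_add_distrib, ← Finset.sum_add_distrib]
  rw [hL, hR, Finset.sum_range_succ']
  have hz : ((-1 : ℚ) ^ (n+2-0) * ((36 : ℚ) / 5) ^ 0 * AA (n+2) 0
      + (-1 : ℚ) ^ (n-0) * ((36 : ℚ) / 5) ^ 0 * AA n 0
      + 2 * ((-1 : ℚ) ^ (n+1-0) * ((36 : ℚ) / 5) ^ 0 * AA (n+1) 0)) = 0 := by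
    rw [AA_zero_right (by omega), AA_zero_right (by omega : (0:ℕ) < n),
        AA_zero_right (by omega), Nat.sub_zero, Nat.sub_zero, Nat.sub_zero]
    ring
  rw [hz, add_zero]
  apply Finset.sum_congr rfl
  intro k hk
  have hk2 : k < n + 2 := Finset.mem_range.mp hk
  by_cases hc : k + 1 ≤ n
  · obtain ⟨d, rfl⟩ : ∃ d, n = k + 1 + d := ⟨n - (k+1), by omega⟩
    rw [show k+1+d+2 - (k+1) = d+2 by omega, show k+1+d - (k+1) = d by omega,
        show k+1+d+1 - (k+1) = d+1 by omega, show k+1+d+1 - k = d+2 by omega]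
    linear_combination ((-1:ℚ))^d * ((36:ℚ)/5)^(k+1) * key k d
  · have : k = n ∨ k = n + 1 := by omega
    rcases this with rfl | rfl
    · rw [show k+2 - (k+1) = 1 by omega, show k - (k+1) = 0 by omega,
          show k+1 - (k+1) = 0 by omega, show k+1 - k = 1 by omega,
          AA_succ_self (k+1), AA_of_gt (show k < k+1 by omega),
          AA_self (show 0 < k+1 by omega), AA_succ_self k]
      push_cast
      ring
    · rw [show n+2 - (n+1+1) = 0 by omega, show n - (n+1+1) = 0 by omega,
          show n+1 - (n+1+1) = 0 by omega, show n+1 - (n+1) = 0 by omega,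
          AA_self (show 0 < n+2 by omega), AA_of_gt (show n < n+1+1 by omega),
          AA_of_gt (show n+1 < n+1+1 by omega), AA_self (show 0 < n+1 by omega)]
      ring

lemma closed (n : ℕ) :
    SS (n+1) = ((25:ℚ)^(n+1)+1)/(2*5^(n+1)) ∧ SS (n+2) = ((25:ℚ)^(n+2)+1)/(2*5^(n+2)) := by
  induction n with
  | zero =>
    constructor <;> norm_num [SS, Finset.sum_range_succ]
  | succ m ih =>
    obtain ⟨h1, h2⟩ := ih
    refine ⟨h2, ?_⟩
    have hr := SS_rec (m+1) (by omega)
    have h5 : ((5:ℚ))^m ≠ 0 := by positivity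
    have e3 : SS (m+1+2) = (36/5) * SS (m+1+1) - SS (m+1) - 2 * SS (m+1+1) := by
      linarith [hr]
    rw [show m+1+2 = m+3 from rfl, show m+1+1 = m+2 from rfl] at e3
    rw [e3, h1, h2]
    rw [show (5:ℚ)^(m+3) = 5^m * 125 by ring, show (5:ℚ)^(m+2) = 5^m * 25 by ring,
        show (5:ℚ)^(m+1) = 5^m * 5 by ring]
    field_simp
    ring

theorem stmt_12 (n : ℕ) (hn : 0 < n) :
    ∑ k ∈ range (n + 1), (-1 : ℚ) ^ (n - k) * ((36 : ℚ) / 5) ^ k *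
      ((n : ℚ) / (n + k)) * (Nat.choose (n + k) (n - k)) =
    ((25 : ℚ) ^ n + 1) / (2 * 5 ^ n) := by
  obtain ⟨m, rfl⟩ : ∃ m, n = m + 1 := ⟨n - 1, by omega⟩
  exact (closed m).1
end

section
/- For every real number x and every positive integer n, the sum over k from 1 to n of (-2)^k * (k/(n+k)) * C(n+k, n-k) * (1-x)^{k-1} equals -U_{n-1}(x), where U_m denotes the Chebyshev polynomial of the second kind. -/
open Finset

lemma sum_step (z : ℝ) (m : ℕ) :
    ∑ j ∈ range (m + 3), ((m + 3 + j).choose (2 * j + 1) : ℝ) * z ^ j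
      - 2 * ∑ j ∈ range (m + 3), ((m + 2 + j).choose (2 * j + 1) : ℝ) * z ^ j
      + ∑ j ∈ range (m + 3), ((m + 1 + j).choose (2 * j + 1) : ℝ) * z ^ j
    = z * ∑ j ∈ range (m + 3), ((m + 2 + j).choose (2 * j + 1) : ℝ) * z ^ j := by
  rw [show m + 3 = m + 2 + 1 from rfl]
  have hR : z * ∑ j ∈ range (m + 2 + 1), ((m + 2 + j).choose (2 * j + 1) : ℝ) * z ^ j
      = ∑ j ∈ range (m + 2), ((m + 2 + j).choose (2 * j + 1) : ℝ) * z ^ (j + 1) := by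
    rw [Finset.mul_sum, Finset.sum_range_succ]
    have h0 : (m + 2 + (m + 2)).choose (2 * (m + 2) + 1) = 0 :=
      Nat.choose_eq_zero_of_lt (by omega)
    rw [h0]
    simp only [Nat.cast_zero, zero_mul, mul_zero, add_zero]
    exact Finset.sum_congr rfl fun j _ => by ring
  rw [hR,
    Finset.sum_range_succ' (fun j => ((m + 2 + 1 + j).choose (2 * j + 1) : ℝ) * z ^ j) (m + 2),
    Finset.sum_range_succ' (fun j => ((m + 2 + j).choose (2 * j + 1) : ℝ) * z ^ j) (m + 2),
    Finset.sum_range_succ' (fun j => ((m + 1 + j).choose (2 * j + 1) : ℝ) * z ^ j) (m + 2)]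
  have hsum : ∑ j ∈ range (m + 2),
      (((m + 2 + 1 + (j + 1)).choose (2 * (j + 1) + 1) : ℝ) * z ^ (j + 1)
        - 2 * (((m + 2 + (j + 1)).choose (2 * (j + 1) + 1) : ℝ) * z ^ (j + 1))
        + ((m + 1 + (j + 1)).choose (2 * (j + 1) + 1) : ℝ) * z ^ (j + 1)
        - ((m + 2 + j).choose (2 * j + 1) : ℝ) * z ^ (j + 1)) = 0 := by
    apply Finset.sum_eq_zero
    intro j _
    have pascal : ((m + 2 + 1 + (j + 1)).choose (2 * (j + 1) + 1) : ℝ)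
        + ((m + 1 + (j + 1)).choose (2 * (j + 1) + 1) : ℝ)
        = 2 * ((m + 2 + (j + 1)).choose (2 * (j + 1) + 1) : ℝ)
          + ((m + 2 + j).choose (2 * j + 1) : ℝ) := by
      have h3 : m + 2 + 1 + (j + 1) = (m + 2 + (j + 1)) + 1 := by ring
      have h4 : 2 * (j + 1) + 1 = (2 * j + 2) + 1 := by ring
      rw [h3, h4, Nat.choose_succ_succ (m + 2 + (j + 1)) (2 * j + 2)]
      have h5 : m + 2 + (j + 1) = (m + 1 + (j + 1)) + 1 := by ring
      rw [h5, Nat.choose_succ_succ (m + 1 + (j + 1)) (2 * j + 1),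
        Nat.choose_succ_succ (m + 1 + (j + 1)) (2 * j + 2)]
      have h6 : m + 1 + (j + 1) = m + 2 + j := by ring
      rw [h6]
      push_cast
      ring
    linear_combination pascal * z ^ (j + 1)
  simp only [Finset.sum_sub_distrib, Finset.sum_add_distrib, ← Finset.mul_sum] at hsum
  have c0 : ((m + 2 + 1 + 0).choose (2 * 0 + 1) : ℝ) + ((m + 1 + 0).choose (2 * 0 + 1) : ℝ)
      = 2 * ((m + 2 + 0).choose (2 * 0 + 1) : ℝ) := by
    simp [Nat.choose_one_right]
    ring
  linear_combination hsum + c0 * z ^ 0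

lemma cheb_key (x : ℝ) (m : ℕ) :
    (Polynomial.Chebyshev.U ℝ (m : ℤ)).eval x =
      ∑ j ∈ range (m + 1), ((m + 1 + j).choose (2 * j + 1) : ℝ) * (2 * x - 2) ^ j := by
  induction m using Nat.twoStepInduction with
  | zero => simp
  | one =>
    simp [Finset.sum_range_succ, Polynomial.Chebyshev.U_one]
  | more m ih1 ih2 =>
    have hcast : ((m + 2 : ℕ) : ℤ) = (m : ℤ) + 2 := by push_cast; ring
    rw [hcast, Polynomial.Chebyshev.U_add_two]
    have h1 : ((m : ℤ) + 1) = ((m + 1 : ℕ) : ℤ) := by push_cast; ring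
    rw [h1]
    simp only [Polynomial.eval_sub, Polynomial.eval_mul, Polynomial.eval_ofNat,
      Polynomial.eval_X, ih1, ih2]
    have hA : ∑ j ∈ range (m + 1), ((m + 1 + j).choose (2 * j + 1) : ℝ) * (2 * x - 2) ^ j
        = ∑ j ∈ range (m + 3), ((m + 1 + j).choose (2 * j + 1) : ℝ) * (2 * x - 2) ^ j := by
      conv_rhs => rw [show m + 3 = (m + 2) + 1 from rfl, Finset.sum_range_succ,
        show m + 2 = (m + 1) + 1 from rfl, Finset.sum_range_succ]
      have e1 : (m + 1 + (m + 1)).choose (2 * (m + 1) + 1) = 0 :=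
        Nat.choose_eq_zero_of_lt (by omega)
      have e2 : (m + 1 + (m + 2)).choose (2 * (m + 2) + 1) = 0 :=
        Nat.choose_eq_zero_of_lt (by omega)
      rw [e1, e2]
      push_cast
      ring
    have hB : ∑ j ∈ range (m + 1 + 1), ((m + 1 + 1 + j).choose (2 * j + 1) : ℝ) * (2 * x - 2) ^ j
        = ∑ j ∈ range (m + 3), ((m + 2 + j).choose (2 * j + 1) : ℝ) * (2 * x - 2) ^ j := by
      conv_rhs => rw [show m + 3 = (m + 2) + 1 from rfl, Finset.sum_range_succ]
      have e2 : (m + 2 + (m + 2)).choose (2 * (m + 2) + 1) = 0 :=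
        Nat.choose_eq_zero_of_lt (by omega)
      rw [e2]
      simp [show m + 1 + 1 = m + 2 from rfl]
    rw [hA, hB]
    have key := sum_step (2 * x - 2) m
    simp only [show m + 2 + 1 = m + 3 from rfl]
    linear_combination -key

theorem stmt_15 (x : ℝ) (n : ℕ) (hn : 0 < n) :
    ∑ k ∈ Icc 1 n, (-2 : ℝ) ^ k * ((k : ℝ) / (n + k)) *
      (Nat.choose (n + k) (n - k)) * (1 - x) ^ (k - 1) =
    -(Polynomial.Chebyshev.U ℝ ((n : ℤ) - 1)).eval x := by
  obtain ⟨m, rfl⟩ : ∃ m, n = m + 1 := ⟨n - 1, by omega⟩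
  have hcast : ((m + 1 : ℕ) : ℤ) - 1 = (m : ℤ) := by push_cast; ring
  rw [hcast, cheb_key]
  rw [show Icc 1 (m + 1) = Ico 1 (m + 1 + 1) from rfl]
  rw [Finset.sum_Ico_eq_sum_range]
  simp only [show m + 1 + 1 - 1 = m + 1 from rfl]
  rw [← Finset.sum_neg_distrib]
  apply Finset.sum_congr rfl
  intro j hj
  simp only [Finset.mem_range] at hj
  rw [show 1 + j = j + 1 from Nat.add_comm 1 j]
  have hsymm : (m + 1 + (j + 1)).choose (m + 1 - (j + 1))
      = (m + 1 + (j + 1)).choose (2 * j + 2) := by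
    have h1 : m + 1 - (j + 1) = (m + 1 + (j + 1)) - (2 * j + 2) := by omega
    rw [h1, Nat.choose_symm (by omega)]
  have hmul : (m + 1 + j + 1) * (m + 1 + j).choose (2 * j + 1)
      = (m + 1 + j + 1).choose (2 * j + 1 + 1) * (2 * j + 1 + 1) := by
    simpa [Nat.succ_eq_add_one] using Nat.add_one_mul_choose_eq (m + 1 + j) (2 * j + 1)
  rw [show m + 1 + j + 1 = m + 1 + (j + 1) from by ring,
    show 2 * j + 1 + 1 = 2 * j + 2 from rfl] at hmul
  have hmulR : ((m : ℝ) + j + 2) * ((m + 1 + j).choose (2 * j + 1) : ℝ)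
      = ((m + 1 + (j + 1)).choose (2 * j + 2) : ℝ) * (2 * (j : ℝ) + 2) := by
    have h := congrArg (fun t : ℕ => (t : ℝ)) hmul
    push_cast at h
    linear_combination h
  have hne : ((m : ℝ) + j + 2) ≠ 0 := by positivity
  have hcoef : ((j : ℝ) + 1) / ((m : ℝ) + j + 2) * ((m + 1 + (j + 1)).choose (2 * j + 2) : ℝ)
      = ((m + 1 + j).choose (2 * j + 1) : ℝ) / 2 := by
    rw [div_mul_eq_mul_div, div_eq_div_iff hne two_ne_zero]
    linear_combination -hmulR
  rw [hsymm]
  simp only [Nat.add_sub_cancel]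
  have hpow : (2 * x - 2) ^ j = (-2 : ℝ) ^ j * (1 - x) ^ j := by
    rw [show (2 * x - 2 : ℝ) = (-2) * (1 - x) by ring, mul_pow]
  rw [hpow]
  push_cast
  linear_combination ((-2 : ℝ) ^ (j + 1) * (1 - x) ^ j) * hcoef
end

section
/- For every positive integer n, the sum over k from 1 to n of (k/(n+k)) * C(n+k, n-k) equals F_{2n}/2, where F_m is the m-th Fibonacci number. -/
/-!
By absorption, `k / (n + k) * C(n + k, n - k) = C(n + k - 1, n - k) / 2`. The numbers
`C(n + k - 1, n - k)`, `1 ≤ k ≤ n`, are the nonzero entries of the antidiagonal `i + j = 2n - 1` of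
Pascal's triangle, whose sum is `F (2n)`.
-/

open Finset

theorem two_mul_mul_choose_sub_eq {n k : ℕ} (hk : 1 ≤ k) (hkn : k ≤ n) :
    2 * k * (n + k).choose (n - k) = (n + k) * (n + k - 1).choose (n - k) := by
  have h := Nat.choose_mul_succ_eq (n + k - 1) (n - k)
  rw [Nat.sub_add_cancel (by omega), show n + k - (n - k) = 2 * k by omega] at h
  linarith

theorem sum_Icc_choose_eq_fib_two_mul (n : ℕ) :
    ∑ k ∈ Icc 1 n, (n + k - 1).choose (n - k) = Nat.fib (2 * n) := by
  rcases n with _ | m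
  · simp
  rw [show 2 * (m + 1) = 2 * m + 1 + 1 by ring, Nat.fib_succ_eq_sum_choose]
  refine sum_bij_ne_zero (fun k _ _ => (m + k, m + 1 - k)) ?_ ?_ ?_ ?_
  · intro k hk _
    simp only [mem_Icc] at hk
    simp only [HasAntidiagonal.mem_antidiagonal]
    omega
  · intro k₁ _ _ k₂ _ _ h
    simp only [Prod.ext_iff] at h
    omega
  · intro p hp hne
    simp only [HasAntidiagonal.mem_antidiagonal] at hp
    have hle : p.2 ≤ p.1 := by
      by_contra! hlt
      exact hne (Nat.choose_eq_zero_of_lt hlt)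
    refine ⟨m + 1 - p.2, mem_Icc.2 ⟨by omega, by omega⟩, ?_, ?_⟩
    · exact (Nat.choose_pos (by omega)).ne'
    · ext <;> simp only <;> omega
  · intro k hk _
    simp only [mem_Icc] at hk
    congr 1
    omega

theorem stmt_16_general (n : ℕ) :
    ∑ k ∈ Icc 1 n, ((k : ℚ) / (n + k)) * (Nat.choose (n + k) (n - k)) =
    (Nat.fib (2 * n) : ℚ) / 2 := by
  rw [← sum_Icc_choose_eq_fib_two_mul, Nat.cast_sum, sum_div]
  refine sum_congr rfl fun k hk => ?_
  obtain ⟨hk, hkn⟩ := mem_Icc.1 hk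
  have hq : (2 * k * (n + k).choose (n - k) : ℚ) = (n + k) * (n + k - 1).choose (n - k) :=
    mod_cast two_mul_mul_choose_sub_eq hk hkn
  have hnk : (n : ℚ) + k ≠ 0 := by positivity
  field_simp
  linarith

theorem stmt_16 (n : ℕ) (hn : 0 < n) :
    ∑ k ∈ Icc 1 n, ((k : ℚ) / (n + k)) * (Nat.choose (n + k) (n - k)) =
    (Nat.fib (2 * n) : ℚ) / 2 :=
  stmt_16_general n
end

section
/- For every positive integer n, the sum over k from 1 to n of (-5)^{k-1} * (k/(n+k)) * C(n+k, n-k) equals (-1)^{n-1} · F_{2n}/2. -/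
/-!
With `k = j + 1`, the summand is `(-5)^j C(n+j, 2j+1) / 2`, so the sum is half the value at
`x = -5` of the Morgan–Voyce polynomial `B_{n-1}(x) = ∑ⱼ C(n+j, 2j+1) xʲ`. Together with its
companion `b_n(x) = ∑ⱼ C(n+j, 2j) xʲ` it satisfies the Pascal-type system
`B_{n+1} = B_n + b_{n+1}`, `b_{n+1} = b_n + x B_n`, and at `x = -5` both are solved by signed
Fibonacci numbers of even index, since `F_{2n+4} = 3 F_{2n+2} - F_{2n}`.
-/

open Finset

theorem fib_add_four_add_fib (n : ℕ) : Nat.fib (n + 4) + Nat.fib n = 3 * Nat.fib (n + 2) := by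
  simp only [Nat.fib_add_two]
  ring

namespace MorganVoyce

variable {R : Type*} [CommRing R]

def bigB (n : ℕ) (x : R) : R :=
  ∑ k ∈ range (n + 1), (Nat.choose (n + k + 1) (2 * k + 1) : R) * x ^ k

def smallB (n : ℕ) (x : R) : R :=
  ∑ k ∈ range (n + 1), (Nat.choose (n + k) (2 * k) : R) * x ^ k

theorem bigB_zero (x : R) : bigB 0 x = 1 := by
  simp [bigB]

theorem smallB_zero (x : R) : smallB 0 x = 1 := by
  simp [smallB]

theorem smallB_succ (n : ℕ) (x : R) : smallB (n + 1) x = smallB n x + x * bigB n x := by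
  have pascal : ∀ i ∈ range (n + 1),
      (Nat.choose (n + 1 + (i + 1)) (2 * (i + 1)) : R) * x ^ (i + 1) =
        x * ((Nat.choose (n + i + 1) (2 * i + 1) : R) * x ^ i) +
          (Nat.choose (n + (i + 1)) (2 * (i + 1)) : R) * x ^ (i + 1) := by
    intro i _
    rw [show n + 1 + (i + 1) = n + i + 1 + 1 by ring, show 2 * (i + 1) = 2 * i + 1 + 1 by ring,
      Nat.choose_succ_succ', show n + (i + 1) = n + i + 1 by ring]
    push_cast
    ring
  have extend : smallB n x = ∑ k ∈ range (n + 2), (Nat.choose (n + k) (2 * k) : R) * x ^ k := by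
    rw [sum_range_succ, Nat.choose_eq_zero_of_lt (by omega : n + (n + 1) < 2 * (n + 1))]
    simp [smallB]
  rw [smallB, sum_range_succ', sum_congr rfl pascal, sum_add_distrib, ← mul_sum, extend,
    sum_range_succ' _ (n + 1), bigB]
  simp only [add_zero, mul_zero, Nat.choose_zero_right]
  ring

theorem bigB_succ (n : ℕ) (x : R) : bigB (n + 1) x = bigB n x + smallB (n + 1) x := by
  have pascal : ∀ k ∈ range (n + 2),
      (Nat.choose (n + 1 + k + 1) (2 * k + 1) : R) * x ^ k =
        (Nat.choose (n + k + 1) (2 * k + 1) : R) * x ^ k +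
          (Nat.choose (n + 1 + k) (2 * k) : R) * x ^ k := by
    intro k _
    rw [show n + 1 + k + 1 = n + k + 1 + 1 by ring, Nat.choose_succ_succ',
      show n + 1 + k = n + k + 1 by ring]
    push_cast
    ring
  have top_vanishes : Nat.choose (n + (n + 1) + 1) (2 * (n + 1) + 1) = 0 :=
    Nat.choose_eq_zero_of_lt (by omega)
  rw [bigB, sum_congr rfl pascal, sum_add_distrib, sum_range_succ _ (n + 1), top_vanishes]
  simp only [Nat.cast_zero, zero_mul, add_zero]
  rfl

theorem bigB_smallB_neg_five (n : ℕ) :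
    bigB n (-5 : R) = (-1) ^ n * Nat.fib (2 * n + 2) ∧
      smallB n (-5 : R) = (-1) ^ n * (Nat.fib (2 * n) + Nat.fib (2 * n + 2)) := by
  induction n with
  | zero => simp [bigB_zero, smallB_zero]
  | succ n ih =>
    obtain ⟨hB, hb⟩ := ih
    have fib_rec : (Nat.fib (2 * n + 4) : R) = 3 * Nat.fib (2 * n + 2) - Nat.fib (2 * n) := by
      rw [eq_sub_iff_add_eq]
      exact_mod_cast congrArg (Nat.cast : ℕ → R) (fib_add_four_add_fib (2 * n))
    have hb' : smallB (n + 1) (-5 : R) =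
        (-1) ^ (n + 1) * (Nat.fib (2 * (n + 1)) + Nat.fib (2 * (n + 1) + 2)) := by
      rw [smallB_succ, hB, hb, show 2 * (n + 1) + 2 = 2 * n + 4 by ring, fib_rec,
        show 2 * (n + 1) = 2 * n + 2 by ring]
      ring
    refine ⟨?_, hb'⟩
    rw [bigB_succ, hB, hb', show 2 * (n + 1) + 2 = 2 * n + 4 by ring, fib_rec,
      show 2 * (n + 1) = 2 * n + 2 by ring]
    ring

end MorganVoyce

theorem div_mul_choose_sub_eq_choose_div_two {K : Type*} [Field K] [CharZero K] {n k : ℕ}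
    (hk : k ≤ n) :
    ((k + 1 : K) / (n + 1 + (k + 1))) * (Nat.choose (n + 1 + (k + 1)) (n + 1 - (k + 1)) : K) =
      (Nat.choose (n + k + 1) (2 * k + 1) : K) / 2 := by
  have symm : Nat.choose (n + k + 2) (n - k) = Nat.choose (n + k + 2) (2 * k + 2) := by
    rw [show n - k = n + k + 2 - (2 * k + 2) by omega]
    exact Nat.choose_symm (by omega)
  have absorb : ((n + k + 2 : ℕ) : K) * Nat.choose (n + k + 1) (2 * k + 1) =
      Nat.choose (n + k + 2) (2 * k + 2) * (2 * k + 2 : ℕ) := by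
    exact_mod_cast Nat.add_one_mul_choose_eq (n + k + 1) (2 * k + 1)
  rw [show n + 1 + (k + 1) = n + k + 2 by ring, show n + 1 - (k + 1) = n - k by omega, symm]
  push_cast at absorb ⊢
  have hpos : (n : K) + 1 + (k + 1) ≠ 0 := by norm_cast
  field_simp
  linear_combination -absorb

open MorganVoyce in
theorem stmt_17 (n : ℕ) (hn : 0 < n) :
    ∑ k ∈ Icc 1 n, (-5 : ℚ) ^ (k - 1) * ((k : ℚ) / (n + k)) *
      (Nat.choose (n + k) (n - k)) =
    (-1 : ℚ) ^ (n - 1) * (Nat.fib (2 * n) : ℚ) / 2 := by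
  obtain ⟨m, rfl⟩ : ∃ m, n = m + 1 := ⟨n - 1, by omega⟩
  have shift : ∀ f : ℕ → ℚ, ∑ k ∈ Icc 1 (m + 1), f k = ∑ j ∈ range (m + 1), f (j + 1) := by
    intro f
    rw [range_eq_Ico, sum_Ico_add' f 0 (m + 1) 1]
    rfl
  calc _ = ∑ j ∈ range (m + 1), (Nat.choose (m + j + 1) (2 * j + 1) : ℚ) * (-5) ^ j / 2 := by
        rw [shift]
        refine sum_congr rfl fun j hj => ?_
        rw [Nat.add_sub_cancel, mul_assoc, Nat.cast_succ, Nat.cast_succ,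
          div_mul_choose_sub_eq_choose_div_two (Nat.lt_succ_iff.mp (mem_range.mp hj))]
        ring
    _ = bigB m (-5 : ℚ) / 2 := by rw [bigB, sum_div]
    _ = _ := by
        rw [(bigB_smallB_neg_five m).1, Nat.add_sub_cancel, mul_add_one]
end
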